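/- arXiv:2011.01078 — 11 statements merged into one kernel-verified Lean document; each statement's English description precedes it below -/
import Mathlib

section
/- For integers m, n with m even, m ≥ 2, and n odd, n ≥ 3, the maximum size of an independent set in the graph on (ZMod m) × (ZMod n) where (i,j) is adjacent to (i+1,j) and (i,j+1) equals m(n-1)/2. -/
/-- Adjacency in the underlying (toroidal grid) graph of `C_m □ C_n`:
two vertices are joined iff they differ by `(±1,0)` or `(0,±1)`. -/
def Adj {m n : ℕ} (u v : ZMod m × ZMod n) : Prop :=
  v = u + (1, 0) ∨ v = u + (0, 1) ∨ u = v + (1, 0) ∨ u = v + (0, 1)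

/-- A set of vertices is independent if no two of its members are adjacent. -/
def Indep {m n : ℕ} (S : Finset (ZMod m × ZMod n)) : Prop :=
  ∀ u ∈ S, ∀ v ∈ S, ¬ Adj u v

/-- An Italian dominating function on the digraph `C_m □ C_n`
(arcs `(i,j) → (i+1,j)` and `(i,j) → (i,j+1)`): every vertex assigned `0`
has in-neighbour values summing to at least `2`. -/
def ItalianDF {m n : ℕ} (f : ZMod m × ZMod n → ℕ) : Prop :=
  (∀ v, f v ≤ 2) ∧ ∀ v, f v = 0 → 2 ≤ f (v.1 - 1, v.2) + f (v.1, v.2 - 1)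

/-- The set of weights of Italian dominating functions on `C_m □ C_n`. -/
def weights (m n : ℕ) [NeZero m] [NeZero n] : Set ℕ :=
  {w | ∃ f : ZMod m × ZMod n → ℕ, ItalianDF f ∧ ∑ v, f v = w}

/-!
A row `{i} × ZMod n` of an independent set is disjoint from its translate by `(0, 1)`, so it
has at most `n / 2`, i.e. `(n - 1) / 2`, points since `n` is odd; summing over the `m` rows
gives the upper bound. Conversely, as `m` is even, `(i, j) ↦ i + j.val` is a well-defined
parity in `ZMod 2` that flips along every edge except the vertical ones wrapping from
`j = n - 1` to `j = 0`. Hence the points of parity `0` off the last column `j = n - 1` form an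
independent set, and it has `(m / 2) * (n - 1)` points.
-/

open Finset Pointwise

section UpperBound

variable {m n : ℕ}

theorem Indep.mono {S T : Finset (ZMod m × ZMod n)} (hS : Indep S) (hT : T ⊆ S) : Indep T :=
  fun u hu v hv => hS u (hT hu) v (hT hv)

theorem Indep.disjoint_vadd_zero_one {S : Finset (ZMod m × ZMod n)} (hS : Indep S) :
    Disjoint S (((0 : ZMod m), (1 : ZMod n)) +ᵥ S) := by
  rw [disjoint_left]
  intro v hv hv'
  obtain ⟨u, hu, rfl⟩ := mem_vadd_finset.1 hv'
  exact hS u hu _ hv (Or.inr (Or.inl (add_comm _ _)))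

variable [NeZero n]

theorem Indep.two_mul_card_row_le {S : Finset (ZMod m × ZMod n)}
    (hS : Indep S) (i : ZMod m) : 2 * #{u ∈ S | u.1 = i} ≤ n := by
  set F := {u ∈ S | u.1 = i}
  have hrow : F ∪ (((0 : ZMod m), (1 : ZMod n)) +ᵥ F) ⊆ {i} ×ˢ univ := by
    intro v hv
    simp only [mem_product, mem_singleton, mem_univ, and_true]
    rcases mem_union.1 hv with hv | hv
    · exact (mem_filter.1 hv).2
    · obtain ⟨u, hu, rfl⟩ := mem_vadd_finset.1 hv
      simpa using (mem_filter.1 hu).2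
  calc 2 * #F = #F + #(((0 : ZMod m), (1 : ZMod n)) +ᵥ F) := by rw [card_vadd_finset]; ring
    _ = #(F ∪ (((0 : ZMod m), (1 : ZMod n)) +ᵥ F)) :=
      (card_union_of_disjoint (hS.mono (filter_subset _ _)).disjoint_vadd_zero_one).symm
    _ ≤ #({i} ×ˢ (univ : Finset (ZMod n))) := card_le_card hrow
    _ = n := by simp

theorem Indep.card_le_of_odd [NeZero m] {S : Finset (ZMod m × ZMod n)} (hS : Indep S)
    (hn : Odd n) : #S ≤ m * (n - 1) / 2 := by
  have hrow (i : ZMod m) : 2 * #{u ∈ S | u.1 = i} ≤ n - 1 := by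
    have := hS.two_mul_card_row_le i
    obtain ⟨k, rfl⟩ := hn
    omega
  rw [Nat.le_div_iff_mul_le two_pos, mul_comm,
    card_eq_sum_card_fiberwise (f := Prod.fst) (t := univ) (fun _ _ => mem_coe.2 (mem_univ _)),
    mul_sum]
  simpa using sum_le_sum fun i (_ : i ∈ univ) => hrow i

end UpperBound

section LowerBound

variable {m n : ℕ}

def parity (hm : 2 ∣ m) (u : ZMod m × ZMod n) : ZMod 2 :=
  ZMod.castHom hm (ZMod 2) u.1 + u.2.val

theorem parity_add_one_zero (hm : 2 ∣ m) (u : ZMod m × ZMod n) :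
    parity hm (u + (1, 0)) = parity hm u + 1 := by
  simp only [parity, Prod.fst_add, Prod.snd_add, add_zero, map_add, map_one]
  ring

theorem parity_add_zero_one (hm : 2 ∣ m) {u : ZMod m × ZMod n} (hu : u.2.val + 1 < n) :
    parity hm (u + (0, 1)) = parity hm u + 1 := by
  have hval : (u.2 + 1).val = u.2.val + 1 := by
    rw [ZMod.val_add_of_lt] <;> rw [ZMod.val_one_eq_one_mod, Nat.one_mod_eq_one.2 (by omega)]
    exact hu
  simp only [parity, Prod.fst_add, Prod.snd_add, add_zero, hval, Nat.cast_add, Nat.cast_one]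
  ring

theorem indep_of_parity_eq_zero (hm : 2 ∣ m) {S : Finset (ZMod m × ZMod n)}
    (hS : ∀ u ∈ S, u.2.val + 1 < n ∧ parity hm u = 0) : Indep S := by
  have no_flip {u v : ZMod m × ZMod n} (hu : u ∈ S) (hv : v ∈ S)
      (h : parity hm v = parity hm u + 1) : False := by
    rw [(hS v hv).2, (hS u hu).2] at h
    exact absurd h (by decide)
  rintro u hu v hv (rfl | rfl | rfl | rfl)
  · exact no_flip hu hv (parity_add_one_zero hm u)
  · exact no_flip hu hv (parity_add_zero_one hm (hS u hu).1)
  · exact no_flip hv hu (parity_add_one_zero hm v)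
  · exact no_flip hv hu (parity_add_zero_one hm (hS v hv).1)

def checkerboard (m n : ℕ) : Finset (ZMod m × ZMod n) :=
  (range (m / 2) ×ˢ range (n - 1)).image fun p =>
    (((2 * p.1 + p.2 : ℕ) : ZMod m), (p.2 : ZMod n))

theorem checkerboard_indep (hm : 2 ∣ m) : Indep (checkerboard m n) := by
  refine indep_of_parity_eq_zero hm ?_
  simp only [checkerboard, mem_image, mem_product, mem_range]
  rintro _ ⟨⟨a, b⟩, ⟨-, hb⟩, rfl⟩
  simp only [parity, ZMod.val_cast_of_lt (show b < n by omega)]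
  refine ⟨by omega, ?_⟩
  rw [map_natCast, ← Nat.cast_add, ZMod.natCast_eq_zero_iff]
  omega

theorem card_checkerboard (hm : 2 ∣ m) : #(checkerboard m n) = m / 2 * (n - 1) := by
  rw [checkerboard, card_image_of_injOn, card_product, card_range, card_range]
  simp only [Set.InjOn, coe_product, coe_range, Set.mem_prod, Set.mem_Iio, Prod.mk.injEq]
  rintro ⟨a, b⟩ ⟨ha, hb⟩ ⟨a', b'⟩ ⟨ha', hb'⟩ ⟨h1, h2⟩
  have hb : b = b' := by
    simpa [ZMod.val_cast_of_lt (show b < n by omega), ZMod.val_cast_of_lt (show b' < n by omega)]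
      using congrArg ZMod.val h2
  subst hb
  have h2a : ((2 * a : ℕ) : ZMod m) = ((2 * a' : ℕ) : ZMod m) := by
    push_cast at h1 ⊢
    exact add_right_cancel h1
  have := congrArg ZMod.val h2a
  rw [ZMod.val_cast_of_lt (by omega), ZMod.val_cast_of_lt (by omega)] at this
  exact Prod.ext (by omega) rfl

end LowerBound

theorem stmt1_general (m n : ℕ) [NeZero m] [NeZero n]
    (hme : Even m) (hno : Odd n) :
    IsGreatest {k : ℕ | ∃ S : Finset (ZMod m × ZMod n), Indep S ∧ S.card = k}
      (m * (n - 1) / 2) := by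
  have hm : 2 ∣ m := hme.two_dvd
  refine ⟨⟨checkerboard m n, checkerboard_indep hm, ?_⟩, ?_⟩
  · rw [card_checkerboard hm, Nat.div_mul_right_comm hm]
  · rintro k ⟨S, hS, rfl⟩
    exact hS.card_le_of_odd hno

theorem stmt1 (m n : ℕ) [NeZero m] [NeZero n] (hm : 2 ≤ m) (hn : 3 ≤ n)
    (hme : Even m) (hno : Odd n) :
    IsGreatest {k : ℕ | ∃ S : Finset (ZMod m × ZMod n), Indep S ∧ S.card = k}
      (m * (n - 1) / 2) :=
  stmt1_general m n hme hno
end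

section
/- For odd integers m ≥ n ≥ 3, the maximum size of an independent set in the graph on (ZMod m) × (ZMod n) where (i,j) is adjacent to (i±1,j) and (i,j±1) equals m(n-1)/2. -/
/-!
Each row of an independent set is an independent set of the odd cycle `ZMod n`, so it has at
most `n / 2` points. Conversely, let row `i` be `{σ i, σ i + 2, …, σ i + 2 (n / 2 - 1)}`; two such
rows whose offsets differ by `±1` do not meet, so it suffices that `σ : ZMod m → ZMod n` moves by
`±1` at each step, i.e. a closed walk of length `m` in the `n`-cycle. Such a walk exists because
`m ≥ n` and `m + n` is even.
-/

open Finset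

lemma card_eq_sum_card_rows {α β : Type*} [Fintype α] [Fintype β] [DecidableEq α] [DecidableEq β]
    (S : Finset (α × β)) :
    S.card = ∑ a, (univ.filter fun b => (a, b) ∈ S).card := by
  simp only [card_filter]
  rw [← Fintype.sum_prod_type' (fun a b => if (a, b) ∈ S then 1 else 0), ← card_filter]
  simp

lemma two_mul_card_le_of_add_one_notMem {n : ℕ} [NeZero n] {T : Finset (ZMod n)}
    (hT : ∀ a ∈ T, a + 1 ∉ T) : 2 * T.card ≤ n := by
  have hdisj : Disjoint T (T.map (addRightEmbedding 1)) := by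
    simp only [disjoint_right, mem_map, addRightEmbedding_apply]
    rintro _ ⟨a, ha, rfl⟩
    exact hT a ha
  calc 2 * T.card = (T ∪ T.map (addRightEmbedding 1)).card := by
        rw [card_union_of_disjoint hdisj, card_map, two_mul]
    _ ≤ n := (card_le_univ _).trans (ZMod.card n).le

lemma ZMod.comp_val_add_one {m : ℕ} [NeZero m] {α : Type*} (f : ℕ → α) (hf : f m = f 0)
    (i : ZMod m) : f (i + 1).val = f (i.val + 1) := by
  rw [ZMod.val_add, ZMod.val_one_eq_one_mod, Nat.add_mod_mod]
  rcases Nat.lt_or_eq_of_le (ZMod.val_lt i) with h | h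
  · rw [Nat.mod_eq_of_lt h]
  · rw [show i.val + 1 = m from h, Nat.mod_self, hf]

lemma indep_iff {m n : ℕ} {S : Finset (ZMod m × ZMod n)} :
    Indep S ↔ ∀ x ∈ S, x + (1, 0) ∉ S ∧ x + (0, 1) ∉ S := by
  constructor
  · intro hS x hx
    exact ⟨fun h => hS x hx _ h (Or.inl rfl), fun h => hS x hx _ h (Or.inr (Or.inl rfl))⟩
  · rintro hS u hu v hv (rfl | rfl | rfl | rfl)
    exacts [(hS u hu).1 hv, (hS u hu).2 hv, (hS v hv).1 hu, (hS v hv).2 hu]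

lemma Indep.card_le {m n : ℕ} [NeZero m] [NeZero n] {S : Finset (ZMod m × ZMod n)}
    (hS : Indep S) : S.card ≤ m * (n / 2) := by
  have hrow : ∀ i, (univ.filter fun j => (i, j) ∈ S).card ≤ n / 2 := by
    intro i
    rw [Nat.le_div_iff_mul_le two_pos, mul_comm]
    refine two_mul_card_le_of_add_one_notMem fun j hj hj1 => ?_
    simp only [mem_filter, mem_univ, true_and] at hj hj1
    exact (indep_iff.1 hS _ hj).2 (by simpa using hj1)
  calc S.card = ∑ i, (univ.filter fun j => (i, j) ∈ S).card := card_eq_sum_card_rows S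
    _ ≤ ∑ _i : ZMod m, n / 2 := sum_le_sum fun i _ => hrow i
    _ = m * (n / 2) := by simp

def everyOther {n : ℕ} (a : ZMod n) (k : ℕ) : Finset (ZMod n) :=
  (range k).image fun j => a + ((2 * j : ℕ) : ZMod n)

section everyOther

variable {n k : ℕ} {a x : ZMod n}

lemma mem_everyOther : x ∈ everyOther a k ↔ ∃ j < k, a + ((2 * j : ℕ) : ZMod n) = x := by
  simp [everyOther]

lemma natCast_two_mul_add_one_ne {i j : ℕ} (hi : 2 * i + 1 < n) (hj : 2 * j < n) :
    ((2 * i + 1 : ℕ) : ZMod n) ≠ ((2 * j : ℕ) : ZMod n) := by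
  rw [Ne, ZMod.natCast_eq_natCast_iff', Nat.mod_eq_of_lt hi, Nat.mod_eq_of_lt hj]
  omega

lemma card_everyOther (hk : 2 * k ≤ n) : (everyOther a k).card = k := by
  rw [everyOther, card_image_of_injOn, card_range]
  intro i hi j hj hij
  simp only [coe_range, Set.mem_Iio, add_right_inj, ZMod.natCast_eq_natCast_iff'] at hi hj hij
  rw [Nat.mod_eq_of_lt (by omega), Nat.mod_eq_of_lt (by omega)] at hij
  omega

lemma add_one_notMem_everyOther (hk : 2 * k ≤ n) (hx : x ∈ everyOther a k) :
    x + 1 ∉ everyOther a k := by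
  rw [mem_everyOther] at hx ⊢
  rintro ⟨j, hj, hjx⟩
  obtain ⟨i, hi, rfl⟩ := hx
  refine natCast_two_mul_add_one_ne (n := n) (i := i) (j := j) (by omega) (by omega) ?_
  push_cast at hjx ⊢
  linear_combination -hjx

lemma disjoint_everyOther_add_one (hk : 2 * k ≤ n) :
    Disjoint (everyOther a k) (everyOther (a + 1) k) := by
  rw [disjoint_left]
  intro x hx hx1
  rw [mem_everyOther] at hx hx1
  obtain ⟨i, hi, rfl⟩ := hx
  obtain ⟨j, hj, hji⟩ := hx1
  refine natCast_two_mul_add_one_ne (n := n) (i := j) (j := i) (by omega) (by omega) ?_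
  push_cast at hji ⊢
  linear_combination hji

end everyOther

section staircase

variable {m n k : ℕ} [NeZero m] [NeZero n] (σ : ZMod m → ZMod n)

lemma card_filter_mem_everyOther (hk : 2 * k ≤ n) :
    (univ.filter fun x : ZMod m × ZMod n => x.2 ∈ everyOther (σ x.1) k).card = m * k := by
  rw [card_eq_sum_card_rows]
  simp [card_everyOther hk]

lemma indep_filter_mem_everyOther (hk : 2 * k ≤ n)
    (hσ : ∀ i, σ (i + 1) = σ i + 1 ∨ σ (i + 1) = σ i - 1) :
    Indep (univ.filter fun x : ZMod m × ZMod n => x.2 ∈ everyOther (σ x.1) k) := by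
  refine indep_iff.2 fun x hx => ?_
  simp only [mem_filter, mem_univ, true_and, Prod.fst_add, Prod.snd_add, add_zero] at hx ⊢
  refine ⟨fun hx' => ?_, add_one_notMem_everyOther hk hx⟩
  rcases hσ x.1 with h | h <;> rw [h] at hx'
  · exact disjoint_left.1 (disjoint_everyOther_add_one hk) hx hx'
  · rw [← sub_add_cancel (σ x.1) 1] at hx
    exact disjoint_left.1 (disjoint_everyOther_add_one hk) hx' hx

end staircase

lemma exists_cyclic_shift {m n : ℕ} [NeZero m] (hnm : n ≤ m) (hmn : Even (m + n)) :
    ∃ σ : ZMod m → ZMod n, ∀ i, σ (i + 1) = σ i + 1 ∨ σ (i + 1) = σ i - 1 := by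
  -- `s` climbs from `0` to `(m + n) / 2` and descends to `s m = n`, which is `0` in `ZMod n`.
  set s : ℕ → ℕ := fun u => min u (m + n - u)
  have hwrap : (s m : ZMod n) = s 0 := by simp [s, hnm]
  refine ⟨fun i => s i.val, fun i => ?_⟩
  dsimp only
  rw [ZMod.comp_val_add_one (fun u => (s u : ZMod n)) hwrap]
  obtain ⟨r, hr⟩ := hmn
  have hi := ZMod.val_lt i
  have hstep : s (i.val + 1) = s i.val + 1 ∨ s i.val = s (i.val + 1) + 1 := by
    simp only [s]
    omega
  rcases hstep with h | h
  · left
    rw [h, Nat.cast_succ]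
  · right
    rw [h, Nat.cast_succ, add_sub_cancel_right]

theorem stmt2_general (m n : ℕ) [NeZero m] [NeZero n] (hmn : n ≤ m)
    (hmo : Odd m) (hno : Odd n) :
    IsGreatest {k : ℕ | ∃ S : Finset (ZMod m × ZMod n), Indep S ∧ S.card = k}
      (m * (n - 1) / 2) := by
  have hhalf : m * (n - 1) / 2 = m * (n / 2) := by
    obtain ⟨k, rfl⟩ := hno
    rw [Nat.mul_div_assoc m (by omega : 2 ∣ 2 * k + 1 - 1)]
    congr 1
    omega
  rw [hhalf]
  refine ⟨?_, fun _ ⟨S, hS, hcard⟩ => hcard ▸ hS.card_le⟩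
  obtain ⟨σ, hσ⟩ := exists_cyclic_shift hmn (hmo.add_odd hno)
  exact ⟨_, indep_filter_mem_everyOther σ (Nat.mul_div_le n 2) hσ,
    card_filter_mem_everyOther σ (Nat.mul_div_le n 2)⟩

theorem stmt2 (m n : ℕ) [NeZero m] [NeZero n] (hn : 3 ≤ n) (hmn : n ≤ m)
    (hmo : Odd m) (hno : Odd n) :
    IsGreatest {k : ℕ | ∃ S : Finset (ZMod m × ZMod n), Indep S ∧ S.card = k}
      (m * (n - 1) / 2) :=
  stmt2_general m n hmn hmo hno
end

section
/- For odd integers m ≥ n ≥ 3, the Italian domination number of the directed Cartesian product C_m □ C_n equals m(n+1)/2. -/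
/-!
Lower bound: in row `i` every zero of `f` is preceded either by a nonzero entry of row `i` or by
an entry `≥ 2` of row `i - 1`. Writing `P i` and `T i` for the numbers of nonzero entries and of
entries `≥ 2` of row `i`, this gives `n ≤ 2 P i + T (i - 1)`, hence `n + 1 ≤ 2 (P i + T (i - 1))`
as `n` is odd; summing over the rows, `m (n + 1) ≤ 2 ∑ (P i + T i) ≤ 2 ∑ f`.

Upper bound: put `1` on the cells of row `i` whose column lies at an even offset
`0, 2, …, n - 1` from a shift `c i`. A zero at odd offset `x` has the `1` at offset `x - 1` on its
left, and the cell below it has offset `x ± 1`, again a `1`, provided `c (i - 1) = c i ± 1`. Such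
a closed `±1`-walk of length `m` in `ZMod n` exists as `n ≤ m` and `m ≡ n mod 2`: climb from `0`
to `(m + n) / 2` and descend back to `n ≡ 0`.
-/

open Finset

variable {m n : ℕ}

theorem card_range_filter_even (N : ℕ) : #{k ∈ range N | Even k} = (N + 1) / 2 := by
  induction N with
  | zero => rfl
  | succ N ih =>
    rw [range_add_one, filter_insert]
    split_ifs with h
    · obtain ⟨k, rfl⟩ := h
      rw [card_insert_of_notMem (by simp), ih]
      omega
    · obtain ⟨k, rfl⟩ := Nat.not_even_iff_odd.1 h
      rw [ih]
      omega

theorem ZMod.card_filter_even_val [NeZero n] :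
    #{j : ZMod n | Even j.val} = (n + 1) / 2 := by
  rw [← card_range_filter_even]
  refine card_nbij' ZMod.val (fun k => (k : ZMod n)) ?_ ?_ ?_ ?_
  all_goals intro a; simp +contextual [ZMod.val_lt, Nat.mod_eq_of_lt]

theorem ZMod.val_sub_one_of_ne_zero [NeZero m] {i : ZMod m} (hi : i ≠ 0) :
    (i - 1).val = i.val - 1 := by
  have hpos : 0 < i.val := (ZMod.val_pos).2 hi
  have hone : (1 : ZMod m).val = 1 := by
    have := i.val_lt
    rw [ZMod.val_one_eq_one_mod, Nat.mod_eq_of_lt (by omega)]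
  rw [ZMod.val_sub (hone ▸ hpos), hone]

theorem ZMod.val_neg_one_eq [NeZero m] : (-1 : ZMod m).val = m - 1 := by
  obtain ⟨k, rfl⟩ := Nat.exists_eq_succ_of_ne_zero (NeZero.ne m)
  exact ZMod.val_neg_one k

theorem ZMod.even_val_add_one_and_even_val_sub_one (hn : Odd n) {x : ZMod n}
    (hx : ¬Even x.val) : Even (x + 1).val ∧ Even (x - 1).val := by
  have : NeZero n := ⟨hn.pos.ne'⟩
  rw [Nat.not_even_iff_odd] at hx
  have hlt := x.val_lt
  have hsucc : x.val + 1 < n := by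
    obtain ⟨a, ha⟩ := hx; obtain ⟨b, hb⟩ := hn; omega
  have hpos : 1 ≤ x.val := hx.pos
  constructor
  · rw [← ZMod.natCast_zmod_val x, ← Nat.cast_add_one, ZMod.val_cast_of_lt hsucc]
    exact hx.add_one
  · rw [← ZMod.natCast_zmod_val x, ← Nat.cast_pred hpos, ZMod.val_cast_of_lt (by omega)]
    exact Nat.Odd.sub_odd hx odd_one

theorem card_ne_zero_add_card_two_le_le_sum {α : Type*} [Fintype α] (g : α → ℕ) :
    #{a | g a ≠ 0} + #{a | 2 ≤ g a} ≤ ∑ a, g a := by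
  rw [card_filter, card_filter, ← sum_add_distrib]
  gcongr with a
  split_ifs <;> omega

theorem ZMod.le_two_mul_card_ne_zero_add_card_two_le [NeZero n] (hn : Odd n)
    (g h : ZMod n → ℕ) (hgh : ∀ j, g j = 0 → 2 ≤ h j + g (j - 1)) :
    n + 1 ≤ 2 * (#{j | g j ≠ 0} + #{j | 2 ≤ h j}) := by
  have hcover : ({j | g j = 0} : Finset (ZMod n)) ⊆
      ({j | g j ≠ 0} : Finset _).map (addRightEmbedding 1) ∪ ({j | 2 ≤ h j} : Finset _) := by
    intro j hj
    simp only [mem_filter, mem_univ, true_and] at hj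
    have := hgh j hj
    simp only [mem_union, mem_map, mem_filter, mem_univ, true_and, addRightEmbedding_apply]
    by_cases hj1 : g (j - 1) = 0
    · rw [hj1] at this; exact Or.inr (by omega)
    · exact Or.inl ⟨j - 1, hj1, sub_add_cancel j 1⟩
  have hcard := (card_le_card hcover).trans (card_union_le _ _)
  have hsplit := card_filter_add_card_filter_not (s := (univ : Finset (ZMod n))) (fun j => g j = 0)
  rw [card_map] at hcard
  rw [card_univ, ZMod.card] at hsplit
  simp only [ne_eq] at hcard ⊢
  obtain ⟨k, rfl⟩ := hn
  omega

theorem ItalianDF.mul_add_one_le_two_mul_sum [NeZero m] [NeZero n] (hn : Odd n)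
    {f : ZMod m × ZMod n → ℕ} (hf : ItalianDF f) : m * (n + 1) ≤ 2 * ∑ v, f v := by
  set P : ZMod m → ℕ := fun i => #{j | f (i, j) ≠ 0}
  set T : ZMod m → ℕ := fun i => #{j | 2 ≤ f (i, j)}
  have hshift : ∑ i, T (i - 1) = ∑ i, T i :=
    Fintype.sum_equiv (Equiv.subRight 1) _ _ fun _ => rfl
  calc m * (n + 1) = ∑ _i : ZMod m, (n + 1) := by simp
    _ ≤ ∑ i, 2 * (P i + T (i - 1)) := by
        gcongr with i
        exact ZMod.le_two_mul_card_ne_zero_add_card_two_le hn _ _ fun j hj => hf.2 (i, j) hj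
    _ = 2 * ∑ i, (P i + T i) := by rw [← mul_sum, sum_add_distrib, sum_add_distrib, hshift]
    _ ≤ 2 * ∑ i, ∑ j, f (i, j) := by
        gcongr with i
        exact card_ne_zero_add_card_two_le_le_sum _
    _ = 2 * ∑ v, f v := by rw [Fintype.sum_prod_type]

def stripes (c : ZMod m → ZMod n) (v : ZMod m × ZMod n) : ℕ :=
  if Even (v.2 - c v.1).val then 1 else 0

theorem italianDF_stripes (hn : Odd n) {c : ZMod m → ZMod n}
    (hc : ∀ i, c (i - 1) = c i + 1 ∨ c (i - 1) = c i - 1) : ItalianDF (stripes c) := by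
  refine ⟨fun v => by unfold stripes; split_ifs <;> omega, fun ⟨i, j⟩ hv => ?_⟩
  have hodd : ¬Even (j - c i).val := by
    intro h; simp [stripes, h] at hv
  obtain ⟨hadd, hsub⟩ := ZMod.even_val_add_one_and_even_val_sub_one hn hodd
  have hleft : stripes c (i, j - 1) = 1 := by
    rw [stripes, if_pos (by rwa [sub_right_comm])]
  have hbelow : stripes c (i - 1, j) = 1 := by
    show (if Even (j - c (i - 1)).val then 1 else 0) = 1
    rcases hc i with h | h
    · rw [h, show j - (c i + 1) = j - c i - 1 by ring, if_pos hsub]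
    · rw [h, show j - (c i - 1) = j - c i + 1 by ring, if_pos hadd]
  simp only [hleft, hbelow, le_refl]

theorem sum_stripes [NeZero m] [NeZero n] (c : ZMod m → ZMod n) :
    ∑ v, stripes c v = m * ((n + 1) / 2) := by
  have hrow : ∀ i, ∑ j, stripes c (i, j) = (n + 1) / 2 := fun i => by
    rw [← ZMod.card_filter_even_val, card_filter]
    exact Fintype.sum_equiv (Equiv.subRight (c i)) _ _ fun _ => rfl
  simp [Fintype.sum_prod_type, hrow]

def zigzag (m n : ℕ) (i : ZMod m) : ZMod n :=
  (min i.val (m + n - i.val) : ℕ)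

theorem zigzag_sub_one [NeZero m] (hmn : n ≤ m) (hpar : Even (m + n)) (i : ZMod m) :
    zigzag m n (i - 1) = zigzag m n i + 1 ∨ zigzag m n (i - 1) = zigzag m n i - 1 := by
  obtain ⟨k, hk⟩ := hpar
  rcases eq_or_ne i 0 with rfl | hi
  · simp only [zigzag, zero_sub, ZMod.val_neg_one_eq, ZMod.val_zero, zero_le, min_eq_left,
      Nat.cast_zero, zero_add, zero_sub]
    rcases hmn.eq_or_lt with rfl | hlt
    · right
      rw [show min (n - 1) (n + n - (n - 1)) = n - 1 by omega, Nat.cast_pred, ZMod.natCast_self,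
        zero_sub]
      exact NeZero.pos n
    · left
      rw [show min (m - 1) (m + n - (m - 1)) = n + 1 by omega]
      simp
  · have hpos : 0 < i.val := (ZMod.val_pos).2 hi
    have hlt := i.val_lt
    rw [zigzag, zigzag, ZMod.val_sub_one_of_ne_zero hi]
    obtain h | h : min (i.val - 1) (m + n - (i.val - 1)) = min i.val (m + n - i.val) + 1 ∨
        min (i.val - 1) (m + n - (i.val - 1)) + 1 = min i.val (m + n - i.val) := by omega
    · left; rw [h]; push_cast; ring
    · right; rw [← h]; push_cast; ring

theorem stmt8_general (m n : ℕ) [NeZero m] [NeZero n] (hmn : n ≤ m)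
    (hmo : Odd m) (hno : Odd n) :
    IsLeast (weights m n) (m * (n + 1) / 2) := by
  have hhalf : m * (n + 1) / 2 = m * ((n + 1) / 2) :=
    Nat.mul_div_assoc m (even_iff_two_dvd.1 hno.add_one)
  refine ⟨⟨stripes (zigzag m n), italianDF_stripes hno (zigzag_sub_one hmn (hmo.add_odd hno)),
    hhalf ▸ sum_stripes _⟩, ?_⟩
  rintro _ ⟨f, hf, rfl⟩
  have := hf.mul_add_one_le_two_mul_sum hno
  omega

theorem stmt8 (m n : ℕ) [NeZero m] [NeZero n] (hn : 3 ≤ n) (hmn : n ≤ m)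
    (hmo : Odd m) (hno : Odd n) :
    IsLeast (weights m n) (m * (n + 1) / 2) :=
  stmt8_general m n hmn hmo hno
end

section
/- For any digraph D on n vertices, the Italian domination number satisfies γ_I(D) ≥ ⌈2n / (2 + Δ⁺(D))⌉, where Δ⁺(D) is the maximum out-degree. -/
/-! Double counting: for an Italian dominating function `f`, every vertex `v` satisfies
`2 ≤ 2 f(v) + Σ_{u → v} f(u)`. Summing over `v`, each `f(u)` is counted twice for itself and once
for each of its at most `Δ⁺` out-neighbours, so `2n ≤ (2 + Δ⁺) · w(f)`. -/

open Finset

section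
variable {V : Type*} [Fintype V] (D : V → V → Prop) [DecidableRel D]

lemma sum_sum_inNeighbors_eq_sum_outDegree_smul {M : Type*} [AddCommMonoid M] (f : V → M) :
    ∑ v, ∑ u ∈ univ.filter (fun u => D u v), f u = ∑ u, #(univ.filter (fun v => D u v)) • f u := by
  simp only [sum_filter, card_filter, sum_smul, ite_smul, one_smul, zero_smul]
  exact sum_comm

variable {D}

lemma two_le_two_mul_add_sum_inNeighbors {f : V → ℕ}
    (hf : ∀ v, f v = 0 → 2 ≤ ∑ u ∈ univ.filter (fun u => D u v), f u) (v : V) :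
    2 ≤ 2 * f v + ∑ u ∈ univ.filter (fun u => D u v), f u := by
  by_cases h : f v = 0
  · simpa [h] using hf v h
  · omega

lemma two_mul_card_le_sum_mul_two_add_maxOutDegree {f : V → ℕ}
    (hf : ∀ v, f v = 0 → 2 ≤ ∑ u ∈ univ.filter (fun u => D u v), f u) :
    2 * Fintype.card V ≤
      (∑ v, f v) * (2 + univ.sup (fun v => #(univ.filter (fun u => D v u)))) := by
  set Δ := univ.sup (fun v => #(univ.filter (fun u => D v u)))
  calc 2 * Fintype.card V = ∑ _v : V, 2 := by simp [mul_comm]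
    _ ≤ ∑ v, (2 * f v + ∑ u ∈ univ.filter (fun u => D u v), f u) :=
        sum_le_sum fun v _ => two_le_two_mul_add_sum_inNeighbors hf v
    _ = 2 * ∑ v, f v + ∑ u, #(univ.filter (fun v => D u v)) • f u := by
        rw [sum_add_distrib, ← mul_sum, sum_sum_inNeighbors_eq_sum_outDegree_smul]
    _ ≤ 2 * ∑ v, f v + ∑ u, Δ • f u := by
        gcongr with u
        exact le_sup (f := fun v => #(univ.filter (fun u => D v u))) (mem_univ u)
    _ = (∑ v, f v) * (2 + Δ) := by simp only [smul_eq_mul, ← mul_sum]; ring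

end

theorem stmt11_general (V : Type*) [Fintype V] (D : V → V → Prop) [DecidableRel D] :
    ⌈(2 * Fintype.card V : ℚ) /
        (2 + ((Finset.univ.sup (fun v => (Finset.univ.filter (fun u => D v u)).card) : ℕ) : ℚ))⌉₊
      ≤ sInf {w : ℕ | ∃ f : V → ℕ, (∀ v, f v ≤ 2) ∧
          (∀ v, f v = 0 → 2 ≤ ∑ u ∈ Finset.univ.filter (fun u => D u v), f u) ∧
          ∑ v, f v = w} := by
  set S : Set ℕ := {w : ℕ | ∃ f : V → ℕ, (∀ v, f v ≤ 2) ∧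
      (∀ v, f v = 0 → 2 ≤ ∑ u ∈ Finset.univ.filter (fun u => D u v), f u) ∧
      ∑ v, f v = w}
  have hS : S.Nonempty := ⟨_, fun _ => 2, fun _ => le_rfl, fun _ h => absurd h two_ne_zero, rfl⟩
  obtain ⟨f, -, hf, hsum⟩ := Nat.sInf_mem hS
  have key := two_mul_card_le_sum_mul_two_add_maxOutDegree hf
  rw [hsum] at key
  rw [Nat.ceil_le, div_le_iff₀ (by positivity)]
  exact_mod_cast key

theorem stmt11 (V : Type*) [Fintype V] (D : V → V → Prop) [DecidableRel D]
    (hirr : Irreflexive D) :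
    ⌈(2 * Fintype.card V : ℚ) /
        (2 + ((Finset.univ.sup (fun v => (Finset.univ.filter (fun u => D v u)).card) : ℕ) : ℚ))⌉₊
      ≤ sInf {w : ℕ | ∃ f : V → ℕ, (∀ v, f v ≤ 2) ∧
          (∀ v, f v = 0 → 2 ≤ ∑ u ∈ Finset.univ.filter (fun u => D u v), f u) ∧
          ∑ v, f v = w} :=
  stmt11_general V D
end

section
/- For any digraph D on n vertices, γ_I(D) ≤ n; moreover γ_I(D) = n if and only if every vertex of D has out-degree at most 1 and in-degree at most 1. -/
/-!
Giving every vertex weight 1 is Italian dominating, so `γ_I(D) ≤ n`. If a vertex `v` has two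
out-neighbours `a, b`, weights `2` on `v`, `0` on `a, b` and `1` elsewhere save one unit; if it has
two in-neighbours, weight `0` on `v` and `1` elsewhere does. Conversely, if all in- and
out-degrees are at most `1`, every vertex of weight `0` has a unique in-neighbour, which must carry
weight `2`, and distinct such vertices get distinct in-neighbours; so there are at least as many
vertices of weight `2` as of weight `0`, and the total weight is at least `n`.
-/

open Finset

section

variable {V : Type*}

theorem card_ne_zero_add_card_eq_two_le_sum [Fintype V] (f : V → ℕ) :
    #{v | f v ≠ 0} + #{v | f v = 2} ≤ ∑ v, f v := by
  simp only [card_filter, ← sum_add_distrib]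
  exact sum_le_sum fun v _ => by split_ifs <;> omega

theorem sum_lt_card_of_sum_lt_card [Fintype V] {f : V → ℕ} (s : Finset V)
    (hout : ∀ x ∉ s, f x ≤ 1) (hs : ∑ x ∈ s, f x < #s) : ∑ x, f x < Fintype.card V := by
  classical
  have hcompl : ∑ x ∈ sᶜ, f x ≤ #sᶜ := by
    simpa using sum_le_sum fun x hx => hout x (mem_compl.mp hx)
  rw [← sum_add_sum_compl s f, ← card_add_card_compl s]
  omega

theorem exists_eq_two_of_two_le_sum {f : V → ℕ} {s : Finset V} (hs : #s ≤ 1)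
    (hf : ∀ u, f u ≤ 2) (hsum : 2 ≤ ∑ u ∈ s, f u) : ∃ u ∈ s, f u = 2 := by
  by_contra! hne
  have : ∑ u ∈ s, f u ≤ #s • 1 :=
    sum_le_card_nsmul s f 1 fun u hu => by have := hf u; have := hne u hu; omega
  simp only [smul_eq_mul, mul_one] at this
  omega

end

section

variable {V : Type*} [Fintype V] (D : V → V → Prop) [DecidableRel D]

def IsItalianDominating (f : V → ℕ) : Prop :=
  (∀ v, f v ≤ 2) ∧ ∀ v, f v = 0 → 2 ≤ ∑ u ∈ univ.filter (fun u => D u v), f u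

noncomputable def italianNumber : ℕ :=
  sInf {w | ∃ f : V → ℕ, IsItalianDominating D f ∧ ∑ v, f v = w}

theorem isItalianDominating_one : IsItalianDominating D (fun _ : V => 1) :=
  ⟨fun _ => by norm_num, fun _ h => absurd h one_ne_zero⟩

variable {D}

theorem IsItalianDominating.card_eq_zero_le_card_eq_two
    (hdeg : ∀ v : V, #(univ.filter (fun u => D v u)) ≤ 1 ∧ #(univ.filter (fun u => D u v)) ≤ 1)
    {f : V → ℕ} (hf : IsItalianDominating D f) : #{v | f v = 0} ≤ #{v | f v = 2} := by
  refine card_le_card_of_forall_subsingleton (fun z u => D u z) (fun z hz => ?_) ?_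
  · obtain ⟨u, hu, hu2⟩ := exists_eq_two_of_two_le_sum (hdeg z).2 hf.1
      (hf.2 z (mem_filter.mp hz).2)
    exact ⟨u, by simpa using hu2, (mem_filter.mp hu).2⟩
  · intro u _ z₁ hz₁ z₂ hz₂
    exact card_le_one.mp (hdeg u).1 z₁ (by simpa using hz₁.2) z₂ (by simpa using hz₂.2)

theorem IsItalianDominating.card_le_sum
    (hdeg : ∀ v : V, #(univ.filter (fun u => D v u)) ≤ 1 ∧ #(univ.filter (fun u => D u v)) ≤ 1)
    {f : V → ℕ} (hf : IsItalianDominating D f) : Fintype.card V ≤ ∑ v, f v := by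
  have hsplit := card_filter_add_card_filter_not (s := univ) (fun v => f v = 0)
  have hzero := hf.card_eq_zero_le_card_eq_two hdeg
  have hsum := card_ne_zero_add_card_eq_two_le_sum f
  rw [card_univ] at hsplit
  simp only [ne_eq] at hsum
  omega

theorem exists_isItalianDominating_sum_lt_of_one_lt_card_out (hirr : Irreflexive D) {v : V}
    (hv : 1 < #(univ.filter (fun u => D v u))) :
    ∃ f, IsItalianDominating D f ∧ ∑ x, f x < Fintype.card V := by
  classical
  obtain ⟨a, ha, b, hb, hab⟩ := one_lt_card.mp hv
  simp only [mem_filter, mem_univ, true_and] at ha hb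
  have hav : a ≠ v := fun h => hirr v (h ▸ ha)
  have hbv : b ≠ v := fun h => hirr v (h ▸ hb)
  let f : V → ℕ := fun x => if x = v then 2 else if x = a ∨ x = b then 0 else 1
  refine ⟨f, ⟨fun x => by dsimp only [f]; split_ifs <;> omega, fun x hx => ?_⟩, ?_⟩
  · have hvx : D v x := by
      dsimp only [f] at hx
      split_ifs at hx with hxv hxab
      rcases hxab with rfl | rfl <;> assumption
    calc 2 = f v := by simp [f]
      _ ≤ ∑ u ∈ univ.filter (fun u => D u x), f u :=
        single_le_sum (fun _ _ => Nat.zero_le _) (by simpa using hvx)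
  · refine sum_lt_card_of_sum_lt_card {v, a, b} (fun x hx => ?_) ?_
    · simp only [mem_insert, mem_singleton, not_or] at hx
      simp [f, hx.1, hx.2.1, hx.2.2]
    · rw [sum_insert (by simp [hav.symm, hbv.symm]), sum_pair hab,
        card_insert_of_notMem (by simp [hav.symm, hbv.symm]), card_pair hab]
      simp [f, hav, hbv]

theorem exists_isItalianDominating_sum_lt_of_one_lt_card_in (hirr : Irreflexive D) {v : V}
    (hv : 1 < #(univ.filter (fun u => D u v))) :
    ∃ f, IsItalianDominating D f ∧ ∑ x, f x < Fintype.card V := by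
  classical
  obtain ⟨a, ha, b, hb, hab⟩ := one_lt_card.mp hv
  simp only [mem_filter, mem_univ, true_and] at ha hb
  have hav : a ≠ v := fun h => hirr v (h ▸ ha)
  have hbv : b ≠ v := fun h => hirr v (h ▸ hb)
  let f : V → ℕ := fun x => if x = v then 0 else 1
  refine ⟨f, ⟨fun x => by dsimp only [f]; split_ifs <;> omega, fun x hx => ?_⟩, ?_⟩
  · obtain rfl : x = v := by by_contra h; simp [f, h] at hx
    calc 2 = ∑ u ∈ {a, b}, f u := by simp [f, sum_pair hab, hav, hbv]
      _ ≤ ∑ u ∈ univ.filter (fun u => D u x), f u :=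
        sum_le_sum_of_subset (by simp [insert_subset_iff, ha, hb])
  · exact sum_lt_card_of_sum_lt_card {v} (fun x _ => by dsimp only [f]; split_ifs <;> omega)
      (by simp [f])

theorem IsItalianDominating.italianNumber_le_sum {f : V → ℕ} (hf : IsItalianDominating D f) :
    italianNumber D ≤ ∑ v, f v :=
  Nat.sInf_le ⟨f, hf, rfl⟩

variable (D)

theorem italianNumber_le_card : italianNumber D ≤ Fintype.card V := by
  simpa using (isItalianDominating_one D).italianNumber_le_sum

theorem italianNumber_eq_card_iff (hirr : Irreflexive D) :
    italianNumber D = Fintype.card V ↔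
      ∀ v : V, #(univ.filter (fun u => D v u)) ≤ 1 ∧ #(univ.filter (fun u => D u v)) ≤ 1 := by
  constructor
  · intro heq v
    by_contra! hv
    obtain ⟨f, hf, hlt⟩ : ∃ f, IsItalianDominating D f ∧ ∑ x, f x < Fintype.card V := by
      by_cases hout : #(univ.filter (fun u => D v u)) ≤ 1
      · exact exists_isItalianDominating_sum_lt_of_one_lt_card_in hirr (hv hout)
      · exact exists_isItalianDominating_sum_lt_of_one_lt_card_out hirr (not_le.mp hout)
    have := hf.italianNumber_le_sum
    omega
  · intro hdeg
    refine le_antisymm (italianNumber_le_card D)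
      (le_csInf ⟨_, _, isItalianDominating_one D, rfl⟩ ?_)
    rintro w ⟨f, hf, rfl⟩
    exact hf.card_le_sum hdeg

end

theorem stmt12 (V : Type*) [Fintype V] (D : V → V → Prop) [DecidableRel D]
    (hirr : Irreflexive D) :
    sInf {w : ℕ | ∃ f : V → ℕ, (∀ v, f v ≤ 2) ∧
        (∀ v, f v = 0 → 2 ≤ ∑ u ∈ Finset.univ.filter (fun u => D u v), f u) ∧
        ∑ v, f v = w} ≤ Fintype.card V ∧
    (sInf {w : ℕ | ∃ f : V → ℕ, (∀ v, f v ≤ 2) ∧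
        (∀ v, f v = 0 → 2 ≤ ∑ u ∈ Finset.univ.filter (fun u => D u v), f u) ∧
        ∑ v, f v = w} = Fintype.card V ↔
      ∀ v : V, (Finset.univ.filter (fun u => D v u)).card ≤ 1 ∧
        (Finset.univ.filter (fun u => D u v)).card ≤ 1) := by
  have h : sInf {w : ℕ | ∃ f : V → ℕ, (∀ v, f v ≤ 2) ∧
      (∀ v, f v = 0 → 2 ≤ ∑ u ∈ Finset.univ.filter (fun u => D u v), f u) ∧
      ∑ v, f v = w} = italianNumber D := by
    simp only [italianNumber, IsItalianDominating, and_assoc]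
  rw [h]
  exact ⟨italianNumber_le_card D, italianNumber_eq_card_iff D hirr⟩
end

section
/- The Italian domination number of the directed cycle C_n (n ≥ 2) equals n. -/
/-!
Discharging: every vertex of weight at least 2 passes one unit of charge to its out-neighbour.
A vertex of weight 0 receives a unit from its in-neighbour, and every other vertex keeps at
least one unit, so each vertex ends with charge at least 1 while the total weight is unchanged.
-/

open Finset

theorem Fintype.card_le_sum_of_eq_zero_imp_two_le_perm {α : Type*} [Fintype α]
    (σ : Equiv.Perm α) (f : α → ℕ) (hf : ∀ v, f v = 0 → 2 ≤ f (σ v)) :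
    Fintype.card α ≤ ∑ v, f v := by
  classical
  set charge : α → ℕ := fun v => if 2 ≤ f v then 1 else 0
  have pointwise : ∀ v, 1 + charge v ≤ f v + charge (σ v) := by
    intro v
    have := hf v
    simp only [charge]
    split_ifs <;> omega
  have shift : ∑ v, charge (σ v) = ∑ v, charge v := Equiv.sum_comp σ charge
  have total := sum_le_sum fun v (_ : v ∈ univ) => pointwise v
  rw [sum_add_distrib, sum_add_distrib, shift, sum_const, card_univ, smul_eq_mul,
    mul_one] at total
  omega

theorem stmt13_general (n : ℕ) [NeZero n] :
    IsLeast {w : ℕ | ∃ f : ZMod n → ℕ, (∀ v, f v ≤ 2) ∧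
        (∀ v, f v = 0 → 2 ≤ f (v - 1)) ∧ ∑ v, f v = w} n := by
  constructor
  · exact ⟨fun _ => 1, fun _ => by norm_num, fun _ h => absurd h one_ne_zero, by simp⟩
  · rintro w ⟨f, -, hf, rfl⟩
    simpa using Fintype.card_le_sum_of_eq_zero_imp_two_le_perm (Equiv.subRight 1) f hf

theorem stmt13 (n : ℕ) [NeZero n] (hn : 2 ≤ n) :
    IsLeast {w : ℕ | ∃ f : ZMod n → ℕ, (∀ v, f v ≤ 2) ∧
        (∀ v, f v = 0 → 2 ≤ f (v - 1)) ∧ ∑ v, f v = w} n :=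
  stmt13_general n
end

section
/- For n odd, n ≥ 3, the Italian domination number of the directed Cartesian product C_2 □ C_n equals n + 1. -/
open Finset

theorem sum_add_sum_comp_sub {G : Type*} [AddGroup G] [Fintype G] (g : G → ℕ) (t : G) :
    ∑ x, (g x + g (x - t)) = 2 * ∑ x, g x := by
  rw [sum_add_distrib, Fintype.sum_equiv (Equiv.subRight t) (fun x => g (x - t)) g (fun _ => rfl),
    two_mul]

def colSum {n : ℕ} (f : ZMod 2 × ZMod n → ℕ) (j : ZMod n) : ℕ :=
  f (0, j) + f (1, j)

theorem sum_eq_sum_colSum {n : ℕ} [NeZero n] (f : ZMod 2 × ZMod n → ℕ) :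
    ∑ v, f v = ∑ j, colSum f j := by
  rw [Fintype.sum_prod_type_right]
  rfl

namespace ItalianDF

variable {n : ℕ} {f : ZMod 2 × ZMod n → ℕ}

theorem two_le_of_apply_zero_eq_zero (hf : ItalianDF f) {j : ZMod n} (h : f (0, j) = 0) :
    2 ≤ f (1, j) + f (0, j - 1) :=
  hf.2 (0, j) h

theorem two_le_of_apply_one_eq_zero (hf : ItalianDF f) {j : ZMod n} (h : f (1, j) = 0) :
    2 ≤ f (0, j) + f (1, j - 1) :=
  hf.2 (1, j) h

theorem two_le_colSum_add_colSum_sub_one (hf : ItalianDF f) (j : ZMod n) :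
    2 ≤ colSum f j + colSum f (j - 1) := by
  unfold colSum
  by_cases h0 : f (0, j) = 0
  · have := hf.two_le_of_apply_zero_eq_zero h0
    omega
  by_cases h1 : f (1, j) = 0
  · have := hf.two_le_of_apply_one_eq_zero h1
    omega
  omega

theorem four_le_colSum_sub_one (hf : ItalianDF f) {j : ZMod n} (h : colSum f j = 0) :
    4 ≤ colSum f (j - 1) := by
  unfold colSum at h ⊢
  have := hf.two_le_of_apply_zero_eq_zero (j := j) (by omega)
  have := hf.two_le_of_apply_one_eq_zero (j := j) (by omega)
  omega

theorem colSum_eq_one_of_sum_le [NeZero n] (hf : ItalianDF f) (h : ∑ v, f v ≤ n)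
    (j : ZMod n) : colSum f j = 1 := by
  have hpair : ∀ j, colSum f j + colSum f (j - 1) = 2 := by
    by_contra! hne
    obtain ⟨k, hk⟩ := hne
    have hlt : ∑ _j : ZMod n, 2 < ∑ j, (colSum f j + colSum f (j - 1)) :=
      sum_lt_sum (fun j _ => hf.two_le_colSum_add_colSum_sub_one j)
        ⟨k, mem_univ k, lt_of_le_of_ne (hf.two_le_colSum_add_colSum_sub_one k) hk.symm⟩
    rw [sum_add_sum_comp_sub, ← sum_eq_sum_colSum] at hlt
    simp only [sum_const, card_univ, ZMod.card, smul_eq_mul] at hlt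
    omega
  have hpos : ∀ j, colSum f j ≠ 0 := fun j h0 => by
    have := hf.four_le_colSum_sub_one h0
    have := hpair j
    omega
  have := hpair j
  have := hpos j
  have := hpos (j - 1)
  omega

theorem apply_zero_add_apply_zero_sub_one (hf : ItalianDF f) (hc : ∀ j, colSum f j = 1)
    (j : ZMod n) : f (0, j) + f (0, j - 1) = 1 := by
  have hj := hc j
  have hj' := hc (j - 1)
  unfold colSum at hj hj'
  by_cases h0 : f (0, j) = 0
  · have := hf.two_le_of_apply_zero_eq_zero h0
    omega
  · have := hf.two_le_of_apply_one_eq_zero (j := j) (by omega)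
    omega

theorem lt_sum [NeZero n] (hf : ItalianDF f) (hno : Odd n) : n < ∑ v, f v := by
  by_contra! h
  have hc := hf.colSum_eq_one_of_sum_le h
  have hrow := sum_add_sum_comp_sub (fun j => f (0, j)) 1
  simp only [hf.apply_zero_add_apply_zero_sub_one hc, sum_const, card_univ, ZMod.card,
    smul_eq_mul, mul_one] at hrow
  obtain ⟨k, hk⟩ := hno
  omega

end ItalianDF

def checkerboardWithCorner (n : ℕ) (v : ZMod 2 × ZMod n) : ℕ :=
  (if v.1 + (v.2.val : ZMod 2) = 0 then 1 else 0) + if v = (1, 0) then 1 else 0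

theorem italianDF_checkerboardWithCorner (n : ℕ) [NeZero n] :
    ItalianDF (checkerboardWithCorner n) := by
  refine ⟨fun v => by unfold checkerboardWithCorner; split_ifs <;> omega, ?_⟩
  rintro ⟨i, j⟩ hv
  simp only [checkerboardWithCorner, Nat.add_eq_zero_iff, ite_eq_right_iff,
    one_ne_zero, imp_false] at hv
  obtain ⟨hoff, hcorner⟩ := hv
  have hi : i + (j.val : ZMod 2) = 1 := by
    generalize i + (j.val : ZMod 2) = x at hoff
    revert x
    decide
  have hj : j ≠ 0 := by
    rintro rfl
    simp only [ZMod.val_zero, Nat.cast_zero, add_zero] at hi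
    exact hcorner (by rw [hi])
  -- away from column `0`, stepping back along either arc flips the checkerboard colour
  have hprev : ((j - 1).val : ZMod 2) = (j.val : ZMod 2) - 1 := by
    rw [ZMod.natCast_val, ZMod.natCast_val, ZMod.cast_sub_one, if_neg hj]
  have hleft : i - 1 + (j.val : ZMod 2) = 0 := by
    rw [sub_add_eq_add_sub, hi, sub_self]
  have hdown : i + ((j - 1).val : ZMod 2) = 0 := by
    rw [hprev, add_sub, hi, sub_self]
  simp only [checkerboardWithCorner, hleft, hdown, if_true]
  omega

theorem sum_checkerboardWithCorner (n : ℕ) [NeZero n] :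
    ∑ v, checkerboardWithCorner n v = n + 1 := by
  simp only [checkerboardWithCorner, sum_add_distrib, sum_ite_eq', mem_univ, if_true,
    Fintype.sum_prod_type_right, add_eq_zero_iff_eq_neg, sum_const, card_univ, ZMod.card,
    smul_eq_mul, mul_one]

theorem stmt14_general (n : ℕ) [NeZero n] (hno : Odd n) :
    IsLeast (weights 2 n) (n + 1) :=
  ⟨⟨_, italianDF_checkerboardWithCorner n, sum_checkerboardWithCorner n⟩,
    fun _ ⟨_, hf, hw⟩ => hw ▸ hf.lt_sum hno⟩

theorem stmt14 (n : ℕ) [NeZero n] (hn : 3 ≤ n) (hno : Odd n) :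
    IsLeast (weights 2 n) (n + 1) :=
  stmt14_general n hno
end

section
/- For n ≥ 3, the Italian domination number of the directed Cartesian product C_3 □ C_n equals 2n. -/
/-! Column `j` of an Italian dominating function of `C_3 □ C_n` only receives arcs from itself
and from column `j - 1`. A case check over all pairs of consecutive columns shows that the weight
of column `j` is at least `2 + φ(column j) - φ(column j - 1)` for the bounded potential
`φ(a, b, c) = min 2 (max (a + b + c - 2) #{entries equal to 2})`, which measures how much a column
can contribute to the next one. Summing around the cycle, the potentials telescope, so the weight
is at least `2n`. Conversely, putting `1` on two consecutive rows `c j, c j + 1` of each column `j`,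
where `c` is a proper 3-colouring of the cycle `C_n`, gives an Italian dominating function of
weight exactly `2n`. -/

section LowerBound

def columnPotential (a b c : ℕ) : ℤ :=
  min 2 (max ((a : ℤ) + b + c - 2)
    ((if a = 2 then 1 else 0) + (if b = 2 then 1 else 0) + (if c = 2 then 1 else 0)))

lemma columnPotential_step_fin : ∀ a b c a' b' c' : Fin 3,
    (a' = 0 → 2 ≤ c'.val + a.val) → (b' = 0 → 2 ≤ a'.val + b.val) →
    (c' = 0 → 2 ≤ b'.val + c.val) →
    2 + columnPotential a' b' c' - columnPotential a b c ≤ (a'.val : ℤ) + b'.val + c'.val := by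
  decide

/-- `(a, b, c)` is the column `j - 1` and `(a', b', c')` the column `j`, read along the rows
`0, 1, 2`; the hypotheses are the Italian conditions on column `j`. -/
lemma columnPotential_step {a b c a' b' c' : ℕ} (ha : a ≤ 2) (hb : b ≤ 2) (hc : c ≤ 2)
    (ha' : a' ≤ 2) (hb' : b' ≤ 2) (hc' : c' ≤ 2)
    (h₀ : a' = 0 → 2 ≤ c' + a) (h₁ : b' = 0 → 2 ≤ a' + b) (h₂ : c' = 0 → 2 ≤ b' + c) :
    2 + columnPotential a' b' c' - columnPotential a b c ≤ (a' : ℤ) + b' + c' :=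
  columnPotential_step_fin ⟨a, by omega⟩ ⟨b, by omega⟩ ⟨c, by omega⟩
    ⟨a', by omega⟩ ⟨b', by omega⟩ ⟨c', by omega⟩
    (fun h => h₀ (congrArg Fin.val h)) (fun h => h₁ (congrArg Fin.val h))
    (fun h => h₂ (congrArg Fin.val h))

variable {n : ℕ} {f : ZMod 3 × ZMod n → ℕ}

lemma ItalianDF.two_add_columnPotential_sub_le (hf : ItalianDF f) (j : ZMod n) :
    2 + columnPotential (f (0, j)) (f (1, j)) (f (2, j))
      - columnPotential (f (0, j - 1)) (f (1, j - 1)) (f (2, j - 1))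
      ≤ (f (0, j) : ℤ) + f (1, j) + f (2, j) := by
  obtain ⟨hle, hdom⟩ := hf
  have h₀ := hdom (0, j)
  have h₁ := hdom (1, j)
  have h₂ := hdom (2, j)
  simp only [show (0 : ZMod 3) - 1 = 2 from rfl, show (1 : ZMod 3) - 1 = 0 from rfl,
    show (2 : ZMod 3) - 1 = 1 from rfl] at h₀ h₁ h₂
  exact columnPotential_step (hle _) (hle _) (hle _) (hle _) (hle _) (hle _) h₀ h₁ h₂

lemma sum_zmod_three_prod [NeZero n] {M : Type*} [AddCommMonoid M] (g : ZMod 3 × ZMod n → M) :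
    ∑ v, g v = ∑ j, (g (0, j) + g (1, j) + g (2, j)) := by
  rw [Fintype.sum_prod_type_right]
  exact Finset.sum_congr rfl fun j _ => Fin.sum_univ_three fun i => g (i, j)

theorem ItalianDF.two_mul_le_sum [NeZero n] (hf : ItalianDF f) : 2 * n ≤ ∑ v, f v := by
  set φ : ZMod n → ℤ := fun j => columnPotential (f (0, j)) (f (1, j)) (f (2, j))
  have hshift : ∑ j, φ (j - 1) = ∑ j, φ j := (Equiv.subRight 1).sum_comp φ
  zify
  calc (2 * n : ℤ) = ∑ j, (2 + φ j - φ (j - 1)) := by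
        simp [Finset.sum_sub_distrib, Finset.sum_add_distrib, hshift, mul_comm]
    _ ≤ ∑ j, ((f (0, j) : ℤ) + f (1, j) + f (2, j)) :=
        Finset.sum_le_sum fun j _ => hf.two_add_columnPotential_sub_le j
    _ = ∑ v, (f v : ℤ) := (sum_zmod_three_prod fun v => (f v : ℤ)).symm

end LowerBound

section Construction

open SimpleGraph in
theorem exists_zmod_three_ne_sub_one {n : ℕ} (hn : 2 ≤ n) :
    ∃ c : ZMod n → ZMod 3, ∀ j, c j ≠ c (j - 1) := by
  obtain ⟨k, rfl⟩ := Nat.exists_eq_add_of_le' hn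
  let c := cycleGraph.tricoloring (k + 2) hn
  -- `ZMod (k + 2)` is `Fin (k + 2)` by definition.
  exact ⟨c, fun j : Fin (k + 2) => c.valid (cycleGraph_adj.mpr (.inl (sub_sub_cancel j 1)))⟩

variable {n : ℕ}

def twoRowIndicator (c : ZMod n → ZMod 3) (v : ZMod 3 × ZMod n) : ℕ :=
  if v.1 = c v.2 ∨ v.1 = c v.2 + 1 then 1 else 0

lemma zmod_three_mem_two_rows : ∀ i x y : ZMod 3, i ≠ x → i ≠ x + 1 → x ≠ y →
    i - 1 = x + 1 ∧ (i = y ∨ i = y + 1) := by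
  decide

lemma italianDF_twoRowIndicator {c : ZMod n → ZMod 3} (hc : ∀ j, c j ≠ c (j - 1)) :
    ItalianDF (twoRowIndicator c) := by
  refine ⟨fun v => by unfold twoRowIndicator; split <;> omega, ?_⟩
  rintro ⟨i, j⟩ hv
  obtain ⟨hi₀, hi₁⟩ : i ≠ c j ∧ i ≠ c j + 1 :=
    not_or.mp fun h => by simp [twoRowIndicator, h] at hv
  obtain ⟨hleft, hbelow⟩ := zmod_three_mem_two_rows i (c j) (c (j - 1)) hi₀ hi₁ (hc j)
  simp [twoRowIndicator, hleft, hbelow]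

lemma sum_twoRowIndicator [NeZero n] (c : ZMod n → ZMod 3) :
    ∑ v, twoRowIndicator c v = 2 * n := by
  have hcol : ∀ x : ZMod 3, (∑ i : ZMod 3, if i = x ∨ i = x + 1 then 1 else 0) = 2 := by
    decide
  rw [Fintype.sum_prod_type_right]
  simp only [twoRowIndicator, hcol, Finset.sum_const, Finset.card_univ, ZMod.card, smul_eq_mul,
    mul_comm]

end Construction

theorem stmt15 (n : ℕ) [NeZero n] (hn : 3 ≤ n) :
    IsLeast (weights 3 n) (2 * n) := by
  obtain ⟨c, hc⟩ := exists_zmod_three_ne_sub_one (by omega : 2 ≤ n)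
  refine ⟨⟨twoRowIndicator c, italianDF_twoRowIndicator hc, sum_twoRowIndicator c⟩, ?_⟩
  rintro w ⟨f, hf, rfl⟩
  exact hf.two_mul_le_sum
end

section
/- For n odd, n ≥ 3, the Italian domination number of the directed Cartesian product C_4 □ C_n equals 2n + 2. -/
/-!
Read `f` column by column, `c j i = f (i, j)`: the condition at the vertices of column `j + 1`
involves only the columns `j` and `j + 1`. A check of the local configurations shows that two
consecutive columns weigh at least `4` together, that a tight pair (total weight `4`) never starts
with a column of weight `≥ 3`, that two consecutive columns of weight `2` are checkerboard columns
of opposite phase, and that a column of weight `3` between two checkerboard columns does not change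
the phase.

Let `n` be odd and suppose the weight is at most `2n + 1`. Cutting the cycle into one column `s`
and `(n - 1) / 2` consecutive pairs shows that every column weighs at most `3`, and that all these
pairs are tight when column `s` weighs `3`. A column of weight `≤ 1` has neighbours of weight `≥ 3`,
and cutting at its successor makes the pair formed by its predecessor and itself tight, which is
impossible; so all columns weigh `2`, except at most one of weight `3`. Then the phase flips at each
step of a path of odd length that has to come back to its starting phase.

The weight `2n + 2` is attained by an all-ones column followed by checkerboard columns.
-/

open Finset

theorem sum_zmod_four {M : Type*} [AddCommMonoid M] (x : ZMod 4 → M) :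
    ∑ i, x i = x 0 + x 1 + x 2 + x 3 :=
  Fin.sum_univ_four x

theorem sum_zmod_eq_sum_range {n : ℕ} [NeZero n] {M : Type*} [AddCommMonoid M] (g : ZMod n → M) :
    ∑ j, g j = ∑ t ∈ range n, g t :=
  sum_nbij' ZMod.val (fun t => (t : ZMod n)) (fun j _ => mem_range.2 j.val_lt)
    (fun _ _ => mem_univ _) (fun j _ => ZMod.natCast_zmod_val j)
    (fun _ ht => ZMod.val_cast_of_lt (mem_range.1 ht)) (fun j _ => by rw [ZMod.natCast_zmod_val])

theorem sum_range_two_mul {M : Type*} [AddCommMonoid M] (g : ℕ → M) (m : ℕ) :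
    ∑ t ∈ range (2 * m), g t = ∑ k ∈ range m, (g (2 * k) + g (2 * k + 1)) := by
  induction m with
  | zero => simp
  | succ m ih =>
    rw [sum_range_succ, ← ih, show 2 * (m + 1) = 2 * m + 1 + 1 by ring, sum_range_succ,
      sum_range_succ, add_assoc]

theorem ZMod.add_one_add_natCast_sub_two {n : ℕ} (hn : 2 ≤ n) (s : ZMod n) :
    s + 1 + ((n - 2 : ℕ) : ZMod n) = s - 1 := by
  rw [Nat.cast_sub hn, ZMod.natCast_self]
  ring

theorem ZMod.val_add_one_of_add_one_ne_zero {n : ℕ} [NeZero n] {j : ZMod n} (h : j + 1 ≠ 0) :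
    (j + 1).val = j.val + 1 := by
  have hj : j + 1 = ((j.val + 1 : ℕ) : ZMod n) := by push_cast; rw [ZMod.natCast_zmod_val]
  rw [hj] at h ⊢
  refine ZMod.val_cast_of_lt ((Nat.add_one_le_of_lt j.val_lt).lt_of_ne fun heq => h ?_)
  rw [heq, ZMod.natCast_self]

theorem sum_eq_add_sum_pairs {m : ℕ} [NeZero (2 * m + 1)] {M : Type*} [AddCommMonoid M]
    (W : ZMod (2 * m + 1) → M) (s : ZMod (2 * m + 1)) :
    ∑ j, W j = W s + ∑ k ∈ range m, (W (s + (2 * k + 1 : ℕ)) + W (s + (2 * k + 1 : ℕ) + 1)) := by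
  rw [← Equiv.sum_comp (Equiv.addLeft s) W, sum_zmod_eq_sum_range, sum_range_succ',
    sum_range_two_mul, add_comm]
  simp [add_assoc, one_add_one_eq_two]

theorem add_mul_le_sum {m b : ℕ} [NeZero (2 * m + 1)] {W : ZMod (2 * m + 1) → ℕ}
    (hpair : ∀ j, b ≤ W j + W (j + 1)) (s : ZMod (2 * m + 1)) : W s + m * b ≤ ∑ j, W j := by
  rw [sum_eq_add_sum_pairs W s]
  have := card_nsmul_le_sum (range m) _ b (fun k _ => hpair (s + (2 * k + 1 : ℕ)))
  rw [card_range, smul_eq_mul] at this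
  omega

theorem pair_eq_of_sum_le {m b : ℕ} [NeZero (2 * m + 1)] {W : ZMod (2 * m + 1) → ℕ}
    (hpair : ∀ j, b ≤ W j + W (j + 1)) {s : ZMod (2 * m + 1)} (hs : ∑ j, W j ≤ W s + m * b)
    {k : ℕ} (hk : k < m) : W (s + (2 * k + 1 : ℕ)) + W (s + (2 * k + 1 : ℕ) + 1) = b := by
  rw [sum_eq_add_sum_pairs W s] at hs
  have hle : ∀ k ∈ range m, b ≤ W (s + (2 * k + 1 : ℕ)) + W (s + (2 * k + 1 : ℕ) + 1) :=
    fun k _ => hpair _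
  refine ((sum_eq_sum_iff_of_le hle).1 (le_antisymm (sum_le_sum hle) ?_) k (mem_range.2 hk)).symm
  rw [sum_const, card_range, smul_eq_mul]
  omega

theorem eq_two_of_pair_eq_four {n : ℕ} {W : ZMod n → ℕ} (hge : ∀ j, 2 ≤ W j) {s : ZMod n}
    {m : ℕ} (hpairs : ∀ k < m, W (s + (2 * k + 1 : ℕ)) + W (s + (2 * k + 1 : ℕ) + 1) = 4)
    {t : ℕ} (ht : t < 2 * m) : W (s + 1 + t) = 2 := by
  obtain ⟨k, rfl | rfl⟩ := Nat.even_or_odd' t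
  all_goals
    have := hpairs k (by omega)
    have := hge (s + (2 * k + 1 : ℕ))
    have := hge (s + (2 * k + 1 : ℕ) + 1)
  · rw [show s + 1 + ((2 * k : ℕ) : ZMod n) = s + ((2 * k + 1 : ℕ) : ZMod n) by push_cast; ring]
    omega
  · rw [show s + 1 + ((2 * k + 1 : ℕ) : ZMod n) = s + ((2 * k + 1 : ℕ) : ZMod n) + 1 by
      push_cast; ring]
    omega

-- Columns are indexed by the `C_n`-coordinate: the in-neighbours of `(i, j)` are `(i - 1, j)`,
-- in the same column `b`, and `(i, j - 1)`, in the previous column `a`.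
def ItalianStep (a b : ZMod 4 → ℕ) : Prop :=
  (∀ i, b i ≤ 2) ∧ ∀ i, b i = 0 → 2 ≤ b (i - 1) + a i

theorem italianDF_iff_forall_italianStep {n : ℕ} (c : ZMod n → ZMod 4 → ℕ) :
    ItalianDF (fun v : ZMod 4 × ZMod n => c v.2 v.1) ↔ ∀ j, ItalianStep (c j) (c (j + 1)) := by
  constructor
  · rintro ⟨hle, hzero⟩ j
    exact ⟨fun i => hle (i, j + 1), fun i hi => by simpa using hzero (i, j + 1) hi⟩
  · intro h
    refine ⟨fun v => by simpa using (h (v.2 - 1)).1 v.1, fun v hv => ?_⟩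
    simpa using (h (v.2 - 1)).2 v.1 (by simpa using hv)

theorem italianStep_one (a : ZMod 4 → ℕ) : ItalianStep a 1 :=
  ⟨fun _ => one_le_two, fun _ h => absurd h one_ne_zero⟩

def checker (p : ZMod 2) (i : ZMod 4) : ℕ :=
  if (i.val : ZMod 2) = p then 1 else 0

theorem checker_injective : Function.Injective checker := by decide

theorem checker_add_one_ne (p : ZMod 2) : checker (p + 1) ≠ checker p := by
  revert p; decide

theorem checker_zero_rows :
    checker 0 0 = 1 ∧ checker 0 1 = 0 ∧ checker 0 2 = 1 ∧ checker 0 3 = 0 := by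
  decide

theorem checker_one_rows :
    checker 1 0 = 0 ∧ checker 1 1 = 1 ∧ checker 1 2 = 0 ∧ checker 1 3 = 1 := by
  decide

theorem sum_checker (p : ZMod 2) : ∑ i, checker p i = 2 := by
  revert p; decide

theorem italianStep_checker_add_one (p : ZMod 2) : ItalianStep (checker p) (checker (p + 1)) := by
  revert p; unfold ItalianStep; decide

theorem italianStep_one_checker (p : ZMod 2) : ItalianStep 1 (checker p) := by
  revert p; unfold ItalianStep; decide

namespace ItalianStep

variable {a b : ZMod 4 → ℕ}

theorem rows (h : ItalianStep a b) :
    b 0 ≤ 2 ∧ b 1 ≤ 2 ∧ b 2 ≤ 2 ∧ b 3 ≤ 2 ∧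
    (b 0 = 0 → 2 ≤ b 3 + a 0) ∧ (b 1 = 0 → 2 ≤ b 0 + a 1) ∧
    (b 2 = 0 → 2 ≤ b 1 + a 2) ∧ (b 3 = 0 → 2 ≤ b 2 + a 3) :=
  ⟨h.1 0, h.1 1, h.1 2, h.1 3, h.2 0, h.2 1, h.2 2, h.2 3⟩

theorem four_le_sum_add_sum (h : ItalianStep a b) : 4 ≤ ∑ i, a i + ∑ i, b i := by
  have := h.rows
  rw [sum_zmod_four, sum_zmod_four]
  omega

theorem sum_le_two_of_sum_add_sum_eq_four (h : ItalianStep a b)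
    (h4 : ∑ i, a i + ∑ i, b i = 4) : ∑ i, a i ≤ 2 := by
  have := h.rows
  rw [sum_zmod_four, sum_zmod_four] at *
  omega

theorem exists_checker (h : ItalianStep a b) (ha : ∑ i, a i = 2) (hb : ∑ i, b i = 2) :
    ∃ p, a = checker p ∧ b = checker (p + 1) := by
  have := h.rows
  have := checker_zero_rows
  have := checker_one_rows
  have hext {x y : ZMod 4 → ℕ} (h0 : x 0 = y 0) (h1 : x 1 = y 1) (h2 : x 2 = y 2)
      (h3 : x 3 = y 3) : x = y := by
    funext i; fin_cases i <;> assumption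
  rw [sum_zmod_four] at ha hb
  by_cases hb0 : b 0 = 0
  · refine ⟨0, ?_, show b = checker 1 from ?_⟩ <;>
      exact hext (by omega) (by omega) (by omega) (by omega)
  · refine ⟨1, ?_, show b = checker 0 from ?_⟩ <;>
      exact hext (by omega) (by omega) (by omega) (by omega)

end ItalianStep

theorem eq_of_italianStep_checker {p q : ZMod 2} {y : ZMod 4 → ℕ}
    (hpy : ItalianStep (checker p) y) (hyq : ItalianStep y (checker q)) (hy : ∑ i, y i = 3) :
    p = q := by
  have := hpy.rows
  have := hyq.rows
  have := checker_zero_rows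
  have := checker_one_rows
  rw [sum_zmod_four] at hy
  have two_cases : ∀ r : ZMod 2, r = 0 ∨ r = 1 := by decide
  rcases two_cases p with rfl | rfl <;> rcases two_cases q with rfl | rfl <;> first | rfl | omega

theorem eq_checker_add_of_sum_eq_two {n : ℕ} {c : ZMod n → ZMod 4 → ℕ}
    (hc : ∀ j, ItalianStep (c j) (c (j + 1))) {u : ZMod n} {p : ZMod 2} (hp : c u = checker p)
    (L : ℕ) (h2 : ∀ t ≤ L, ∑ i, c (u + t) i = 2) : c (u + L) = checker (p + L) := by
  induction L with
  | zero => simpa using hp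
  | succ L ih =>
    have hL := ih fun t ht => h2 t (by omega)
    obtain ⟨q, hq, hq1⟩ := (hc (u + L)).exists_checker (h2 L L.le_succ)
      (by simpa [add_assoc] using h2 (L + 1) le_rfl)
    rw [hL] at hq
    rw [Nat.cast_succ, ← add_assoc, hq1, ← checker_injective hq, Nat.cast_succ, add_assoc]

theorem not_forall_sum_eq_two {n : ℕ} (hno : Odd n) {c : ZMod n → ZMod 4 → ℕ}
    (hc : ∀ j, ItalianStep (c j) (c (j + 1))) : ¬ ∀ j, ∑ i, c j i = 2 := by
  intro h2
  obtain ⟨p, hp, -⟩ := (hc 0).exists_checker (h2 0) (by simpa using h2 1)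
  have hchain := eq_checker_add_of_sum_eq_two hc hp n fun _ _ => h2 _
  rw [ZMod.natCast_self, add_zero, hno.natCast_zmod_two] at hchain
  exact checker_add_one_ne p (hchain ▸ hp)

theorem not_forall_sum_eq_two_of_sum_eq_three {n : ℕ} (hno : Odd n) (hn : 3 ≤ n)
    {c : ZMod n → ZMod 4 → ℕ} (hc : ∀ j, ItalianStep (c j) (c (j + 1))) {s : ZMod n}
    (hs : ∑ i, c s i = 3) : ¬ ∀ t ≤ n - 2, ∑ i, c (s + 1 + t) i = 2 := by
  intro h2
  obtain ⟨p, hp, -⟩ := (hc (s + 1)).exists_checker (by simpa using h2 0 (by omega))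
    (by simpa using h2 1 (by omega))
  have hchain := eq_checker_add_of_sum_eq_two hc hp _ h2
  rw [(Nat.Odd.sub_even (by omega) hno even_two).natCast_zmod_two,
    ZMod.add_one_add_natCast_sub_two (by omega)] at hchain
  have hstep := hc (s - 1)
  rw [sub_add_cancel, hchain] at hstep
  exact checker_add_one_ne p
    (congrArg checker (eq_of_italianStep_checker hstep (hp ▸ hc s) hs))

theorem two_mul_add_two_le_sum {n : ℕ} [NeZero n] (hno : Odd n) (hn : 3 ≤ n)
    {c : ZMod n → ZMod 4 → ℕ} (hc : ∀ j, ItalianStep (c j) (c (j + 1))) :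
    2 * n + 2 ≤ ∑ j, ∑ i, c j i := by
  obtain ⟨m, rfl⟩ : ∃ m, n = 2 * (m + 1) + 1 := ⟨n / 2 - 1, by obtain ⟨k, rfl⟩ := hno; omega⟩
  obtain ⟨W, hW⟩ : ∃ W : ZMod (2 * (m + 1) + 1) → ℕ, ∀ j, ∑ i, c j i = W j := ⟨_, fun _ => rfl⟩
  simp only [hW]
  by_contra! hS
  have hpair (j) : 4 ≤ W j + W (j + 1) := by simpa only [hW] using (hc j).four_le_sum_add_sum
  have hle_three (s) : W s ≤ 3 := by have := add_mul_le_sum hpair s; omega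
  have htight {s} (hs : W s = 3) {k} (hk : k < m + 1) :=
    pair_eq_of_sum_le hpair (s := s) (by omega) hk
  have htwo_le (j) : 2 ≤ W j := by
    by_contra! hj
    have hprev := hpair (j - 1)
    rw [sub_add_cancel] at hprev
    have hnext : W (j + 1) = 3 := by have := hpair j; have := hle_three (j + 1); omega
    have htight_prev := htight hnext (k := m) (by omega)
    rw [show 2 * m + 1 = 2 * (m + 1) + 1 - 2 by omega, ZMod.add_one_add_natCast_sub_two (by omega),
      sub_add_cancel] at htight_prev
    have := (hc (j - 1)).sum_le_two_of_sum_add_sum_eq_four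
    simp only [hW, sub_add_cancel] at this
    exact absurd (this htight_prev) (by omega)
  by_cases hheavy : ∃ s, W s = 3
  · obtain ⟨s, hs⟩ := hheavy
    refine not_forall_sum_eq_two_of_sum_eq_three hno hn hc (s := s) (by rw [hW, hs]) fun t ht => ?_
    rw [hW]
    exact eq_two_of_pair_eq_four htwo_le (fun k hk => htight hs hk) (by omega)
  · push Not at hheavy
    refine not_forall_sum_eq_two hno hc fun j => ?_
    have := htwo_le j; have := hle_three j; have := hheavy j
    rw [hW]
    omega

def optimalColumns (n : ℕ) (j : ZMod n) : ZMod 4 → ℕ :=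
  if j = 0 then 1 else checker (j.val : ZMod 2)

theorem italianStep_optimalColumns {n : ℕ} [NeZero n] (j : ZMod n) :
    ItalianStep (optimalColumns n j) (optimalColumns n (j + 1)) := by
  unfold optimalColumns
  by_cases h1 : j + 1 = 0
  · rw [if_pos h1]
    exact italianStep_one _
  rw [if_neg h1]
  by_cases h0 : j = 0
  · rw [if_pos h0]
    exact italianStep_one_checker _
  rw [if_neg h0, ZMod.val_add_one_of_add_one_ne_zero h1, Nat.cast_succ]
  exact italianStep_checker_add_one _

theorem sum_optimalColumns (n : ℕ) [NeZero n] :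
    ∑ j, ∑ i, optimalColumns n j i = 2 * n + 2 := by
  have h (j : ZMod n) : ∑ i, optimalColumns n j i = 2 + if j = 0 then 2 else 0 := by
    unfold optimalColumns
    split_ifs <;> simp [sum_checker]
  simp only [h, sum_add_distrib, sum_const, card_univ, ZMod.card, smul_eq_mul, sum_ite_eq',
    mem_univ, if_true]
  ring

theorem stmt16 (n : ℕ) [NeZero n] (hn : 3 ≤ n) (hno : Odd n) :
    IsLeast (weights 4 n) (2 * n + 2) := by
  have hsum (c : ZMod n → ZMod 4 → ℕ) : ∑ v : ZMod 4 × ZMod n, c v.2 v.1 = ∑ j, ∑ i, c j i := by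
    rw [Fintype.sum_prod_type, sum_comm]
  refine ⟨⟨_, (italianDF_iff_forall_italianStep _).2 italianStep_optimalColumns,
    (hsum _).trans (sum_optimalColumns n)⟩, ?_⟩
  rintro w ⟨f, hf, rfl⟩
  have hlower := two_mul_add_two_le_sum hno hn
    ((italianDF_iff_forall_italianStep fun j i => f (i, j)).1 hf)
  rwa [← hsum] at hlower
end

section
/- For integers m, n ≥ 2, there exists a minimum-weight Italian dominating function of the directed Cartesian product C_m □ C_n in which no two vertices assigned 0 are adjacent in the underlying toroidal grid graph. -/
/-!
Lower bound: let `a`, `b` be consecutive columns. Two consecutive zeros of `b` force a `2` in `a`,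
and the zeros of `b` not preceded by a zero are preceded by distinct nonzero entries, so `b` has at
most `⌊m/2⌋ + #{a = 2}` zeros and weight at least `⌈m/2⌉ + #{b = 2} - #{a = 2}`. Summing over the
columns, every Italian dominating function has weight at least `n ⌈m/2⌉`, and by transposition at
least `m ⌈n/2⌉`.

Upper bound: for a closed walk `s : ZMod n → ZMod m` with steps `±1`, put zeros in column `j` at
`s j + {0, 2, …, 2 (⌊m/2⌋ - 1)}` and ones elsewhere. No two zeros are adjacent, so every zero has
two in-neighbours of value `1`, and the weight is `n ⌈m/2⌉`. Such a walk exists when `n` is even or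
when `m` is odd and `m ≤ n`; in the remaining cases it exists with `m` and `n` exchanged.
-/

open Finset

section ZeroCounting
variable {G : Type*} [AddGroup G] [Fintype G]

lemma card_filter_sub_apply (g : G) (p : G → Prop) [DecidablePred p] :
    #{i | p (i - g)} = #{i | p i} :=
  card_equiv (Equiv.subRight g) (by simp)

lemma two_mul_card_zero_le (g : G) (c : G → ℕ) :
    2 * #{i | c i = 0} ≤ Fintype.card G + #{i | c (i - g) = 0 ∧ c i = 0} := by
  have hsplit :
      #{i | c (i - g) = 0 ∧ c i = 0} + #{i | c (i - g) ≠ 0 ∧ c i = 0} = #{i | c i = 0} := by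
    rw [← card_filter_add_card_filter_not (s := {i | c i = 0}) (fun i => c (i - g) = 0),
      filter_filter, filter_filter]
    simp only [and_comm]
  have hsub : #{i | c (i - g) ≠ 0 ∧ c i = 0} ≤ #{i | c (i - g) ≠ 0} :=
    card_le_card fun i => by simp +contextual
  have hcompl := card_filter_add_card_filter_not (s := univ) (fun i => c i ≠ 0)
  rw [card_filter_sub_apply g (fun x => c x ≠ 0)] at hsub
  simp only [not_not, card_univ] at hcompl
  omega

lemma card_zero_pairs_le_card_two (g : G) {a b : G → ℕ} (ha : ∀ i, a i ≤ 2)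
    (hdom : ∀ i, b i = 0 → 2 ≤ a i + b (i - g)) :
    #{i | b (i - g) = 0 ∧ b i = 0} ≤ #{i | a i = 2} :=
  card_le_card fun i hi => by
    simp only [mem_filter, mem_univ, true_and] at hi ⊢
    have := hdom i hi.2
    have := ha i
    omega

end ZeroCounting

lemma card_add_card_two_le_sum_add_card_zero {α : Type*} [Fintype α] (c : α → ℕ) :
    Fintype.card α + #{i | c i = 2} ≤ ∑ i, c i + #{i | c i = 0} := by
  simp only [card_filter, Fintype.card_eq_sum_ones, ← sum_add_distrib]
  exact sum_le_sum fun i _ => by split_ifs <;> omega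

lemma card_sub_half_add_card_two_le {m : ℕ} [NeZero m] {a b : ZMod m → ℕ} (ha : ∀ i, a i ≤ 2)
    (hdom : ∀ i, b i = 0 → 2 ≤ a i + b (i - 1)) :
    m - m / 2 + #{i | b i = 2} ≤ ∑ i, b i + #{i | a i = 2} := by
  have hzero := two_mul_card_zero_le 1 b
  have hpairs := card_zero_pairs_le_card_two 1 ha hdom
  have hsum := card_add_card_two_le_sum_add_card_zero b
  rw [ZMod.card] at hzero hsum
  -- for odd `m`, rounding `2 * #zeros ≤ m + #zero pairs` down gains half a vertex per column
  omega

lemma ItalianDF.mul_le_sum {m n : ℕ} [NeZero m] [NeZero n] {f : ZMod m × ZMod n → ℕ}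
    (hf : ItalianDF f) : n * (m - m / 2) ≤ ∑ v, f v := by
  have hcol : ∀ j : ZMod n, m - m / 2 + #{i | f (i, j) = 2}
      ≤ ∑ i, f (i, j) + #{i | f (i, j - 1) = 2} := fun j =>
    card_sub_half_add_card_two_le (fun i => hf.1 _) fun i hi => by
      have := hf.2 (i, j) hi
      simp only at this
      omega
  have htot := sum_le_sum fun j (_ : j ∈ univ) => hcol j
  rw [sum_add_distrib, sum_add_distrib,
    ← Equiv.sum_comp (Equiv.subRight 1) (fun j => #{i | f (i, j) = 2})] at htot
  simp only [Equiv.subRight_apply, sum_const, card_univ, ZMod.card, smul_eq_mul] at htot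
  rw [Fintype.sum_prod_type_right]
  omega

section Transpose
variable {m n : ℕ}

lemma ItalianDF.comp_swap {f : ZMod n × ZMod m → ℕ} (hf : ItalianDF f) :
    ItalianDF (f ∘ Prod.swap) :=
  ⟨fun v => hf.1 _, fun v hv => by
    have := hf.2 v.swap hv
    simp only [Function.comp, Prod.swap] at this ⊢
    omega⟩

lemma Adj.swap {u v : ZMod m × ZMod n} (h : Adj u v) : Adj u.swap v.swap := by
  rcases h with rfl | rfl | rfl | rfl <;> simp [Adj, Prod.ext_iff]

lemma weights_comm [NeZero m] [NeZero n] : weights m n = weights n m := by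
  have key : ∀ {m n : ℕ} [NeZero m] [NeZero n], weights m n ⊆ weights n m :=
    fun ⟨f, hf, hw⟩ => ⟨f ∘ Prod.swap, hf.comp_swap, by
      rw [← hw]; exact Equiv.sum_comp (Equiv.prodComm _ _) f⟩
  exact key.antisymm key

end Transpose

section Construction
variable {m n : ℕ}

def evenResidues (m : ℕ) : Finset (ZMod m) :=
  (range (m / 2)).image fun k => ((2 * k : ℕ) : ZMod m)

lemma sub_ne_one_of_mem_evenResidues {x y : ZMod m} (hx : x ∈ evenResidues m)
    (hy : y ∈ evenResidues m) : y - x ≠ 1 := by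
  simp only [evenResidues, mem_image, mem_range] at hx hy
  obtain ⟨k, hk, rfl⟩ := hx
  obtain ⟨l, hl, rfl⟩ := hy
  intro h
  have hcast : ((2 * l : ℕ) : ZMod m) = ((2 * k + 1 : ℕ) : ZMod m) := by
    rw [eq_add_of_sub_eq h]; push_cast; ring
  have := congrArg ZMod.val hcast
  rw [ZMod.val_cast_of_lt (by omega), ZMod.val_cast_of_lt (by omega)] at this
  omega

lemma card_evenResidues : #(evenResidues m) = m / 2 := by
  rw [evenResidues, card_image_of_injOn, card_range]
  intro k hk l hl h
  simp only [coe_range, Set.mem_Iio] at hk hl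
  have := congrArg ZMod.val h
  simp only at this
  rw [ZMod.val_cast_of_lt (by omega), ZMod.val_cast_of_lt (by omega)] at this
  omega

def IsClosedWalk (s : ZMod n → ZMod m) : Prop :=
  ∀ j, s (j + 1) - s j = 1 ∨ s j - s (j + 1) = 1

lemma isClosedWalk_of_periodic [NeZero n] {u : ℕ → ZMod m}
    (hstep : ∀ t, u (t + 1) - u t = 1 ∨ u t - u (t + 1) = 1) (hper : u n = u 0) :
    IsClosedWalk fun j : ZMod n => u j.val := by
  intro j
  have hval : u (j + 1).val = u (j.val + 1) := by
    rw [← ZMod.natCast_zmod_val j, ← Nat.cast_succ, ZMod.val_natCast, ZMod.val_natCast,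
      Nat.mod_eq_of_lt (ZMod.val_lt j)]
    rcases (Nat.succ_le_of_lt (ZMod.val_lt j)).lt_or_eq with h | h
    · rw [Nat.mod_eq_of_lt h]
    · rw [h, Nat.mod_self, ← hper]
      exact congrArg u h.symm
  simp only [hval]
  exact hstep _

lemma exists_isClosedWalk [NeZero n] (r : ℕ) (hrn : r ≤ n) (hmr : m ∣ r) (hpar : Even (n - r)) :
    ∃ s : ZMod n → ZMod m, IsClosedWalk s := by
  -- climb from `0` to `r ≡ 0`, then oscillate between `r` and `r + 1`
  refine ⟨_, isClosedWalk_of_periodic (u := fun t => ((min t r + (t - r) % 2 : ℕ) : ZMod m))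
    (fun t => ?_) ?_⟩
  · obtain h | h : min (t + 1) r + (t + 1 - r) % 2 = min t r + (t - r) % 2 + 1 ∨
        min t r + (t - r) % 2 = min (t + 1) r + (t + 1 - r) % 2 + 1 := by omega
    · left; rw [h, Nat.cast_succ, add_sub_cancel_left]
    · right; rw [h, Nat.cast_succ, add_sub_cancel_left]
  · have hn : min n r + (n - r) % 2 = r := by
      rw [Nat.even_iff] at hpar
      omega
    simp only [hn, zero_le, min_eq_left, zero_tsub, Nat.zero_mod, add_zero, Nat.cast_zero]
    exact (ZMod.natCast_eq_zero_iff r m).mpr hmr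

def walkIDF (s : ZMod n → ZMod m) (v : ZMod m × ZMod n) : ℕ :=
  if v.1 - s v.2 ∈ evenResidues m then 0 else 1

lemma IsClosedWalk.sub_eq_one_of_adj {s : ZMod n → ZMod m} (hs : IsClosedWalk s)
    {u v : ZMod m × ZMod n} (h : Adj u v) :
    (v.1 - s v.2) - (u.1 - s u.2) = 1 ∨ (u.1 - s u.2) - (v.1 - s v.2) = 1 := by
  have step : ∀ u v : ZMod m × ZMod n, v = u + (1, 0) ∨ v = u + (0, 1) →
      (v.1 - s v.2) - (u.1 - s u.2) = 1 ∨ (u.1 - s u.2) - (v.1 - s v.2) = 1 := by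
    rintro u v (rfl | rfl) <;> simp only [Prod.fst_add, Prod.snd_add, add_zero]
    · left; ring
    · rcases hs u.2 with h | h
      · right; rw [← h]; ring
      · left; rw [← h]; ring
  rcases h with h | h | h | h
  exacts [step u v (.inl h), step u v (.inr h), (step v u (.inl h)).symm,
    (step v u (.inr h)).symm]

lemma walkIDF_zero_not_adj {s : ZMod n → ZMod m} (hs : IsClosedWalk s) (u v : ZMod m × ZMod n)
    (hu : walkIDF s u = 0) (hv : walkIDF s v = 0) : ¬ Adj u v := by
  intro h
  simp only [walkIDF, ite_eq_left_iff, one_ne_zero, imp_false, not_not] at hu hv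
  rcases hs.sub_eq_one_of_adj h with h | h
  exacts [sub_ne_one_of_mem_evenResidues hu hv h, sub_ne_one_of_mem_evenResidues hv hu h]

lemma sum_walkIDF [NeZero m] [NeZero n] (s : ZMod n → ZMod m) :
    ∑ v, walkIDF s v = n * (m - m / 2) := by
  have hcol : ∀ j, ∑ i, walkIDF s (i, j) = m - m / 2 := fun j => by
    rw [← Equiv.sum_comp (Equiv.addRight (s j))]
    simp [walkIDF, sum_ite, ← compl_filter, card_compl, card_evenResidues]
  simp [Fintype.sum_prod_type_right, hcol]

end Construction

section Minimum
variable {m n : ℕ}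

lemma italianDF_of_zero_not_adj {f : ZMod m × ZMod n → ℕ} (hle : ∀ v, f v ≤ 2)
    (hz : ∀ u v, f u = 0 → f v = 0 → ¬ Adj u v) : ItalianDF f := by
  refine ⟨hle, fun v hv => ?_⟩
  have h₁ : f (v.1 - 1, v.2) ≠ 0 := fun h => hz _ v h hv (.inl (by ext <;> simp))
  have h₂ : f (v.1, v.2 - 1) ≠ 0 := fun h => hz _ v h hv (.inr (.inl (by ext <;> simp)))
  omega

variable [NeZero m] [NeZero n]

lemma sum_eq_sInf_weights {f : ZMod m × ZMod n → ℕ} (hf : ItalianDF f)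
    (hmin : ∀ g : ZMod m × ZMod n → ℕ, ItalianDF g → ∑ v, f v ≤ ∑ v, g v) :
    ∑ v, f v = sInf (weights m n) :=
  le_antisymm (le_csInf ⟨∑ v, f v, f, hf, rfl⟩ fun _ ⟨g, hg, hw⟩ => hw ▸ hmin g hg)
    (Nat.sInf_le ⟨f, hf, rfl⟩)

variable (m n) in
def HasMinIDFWithIndepZeros : Prop :=
  ∃ f : ZMod m × ZMod n → ℕ, ItalianDF f ∧ ∑ v, f v = sInf (weights m n) ∧
    ∀ u v : ZMod m × ZMod n, f u = 0 → f v = 0 → ¬ Adj u v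

lemma HasMinIDFWithIndepZeros.swap (h : HasMinIDFWithIndepZeros n m) :
    HasMinIDFWithIndepZeros m n := by
  obtain ⟨f, hf, hw, hz⟩ := h
  refine ⟨f ∘ Prod.swap, hf.comp_swap, ?_, fun u v hu hv huv => hz _ _ hu hv huv.swap⟩
  rw [weights_comm, ← hw]
  exact Equiv.sum_comp (Equiv.prodComm _ _) f

lemma hasMinIDFWithIndepZeros_of_isClosedWalk {s : ZMod n → ZMod m} (hs : IsClosedWalk s) :
    HasMinIDFWithIndepZeros m n := by
  have hf : ItalianDF (walkIDF s) :=
    italianDF_of_zero_not_adj (fun v => by unfold walkIDF; split_ifs <;> omega)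
      (walkIDF_zero_not_adj hs)
  exact ⟨walkIDF s, hf,
    sum_eq_sInf_weights hf fun g hg => (sum_walkIDF s).trans_le hg.mul_le_sum,
    walkIDF_zero_not_adj hs⟩

end Minimum

theorem stmt17_general (m n : ℕ) [NeZero m] [NeZero n] :
    ∃ f : ZMod m × ZMod n → ℕ, ItalianDF f ∧ ∑ v, f v = sInf (weights m n) ∧
      ∀ u v : ZMod m × ZMod n, f u = 0 → f v = 0 → ¬ Adj u v := by
  rcases Nat.even_or_odd n with hn | hn
  · obtain ⟨s, hs⟩ := exists_isClosedWalk (m := m) 0 n.zero_le (dvd_zero m) (by simpa using hn)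
    exact hasMinIDFWithIndepZeros_of_isClosedWalk hs
  rcases Nat.even_or_odd m with hm | hm
  · obtain ⟨s, hs⟩ := exists_isClosedWalk (m := n) 0 m.zero_le (dvd_zero n) (by simpa using hm)
    exact (hasMinIDFWithIndepZeros_of_isClosedWalk hs).swap
  rcases le_total m n with hmn | hnm
  · obtain ⟨s, hs⟩ := exists_isClosedWalk m hmn dvd_rfl (Nat.Odd.sub_odd hn hm)
    exact hasMinIDFWithIndepZeros_of_isClosedWalk hs
  · obtain ⟨s, hs⟩ := exists_isClosedWalk n hnm dvd_rfl (Nat.Odd.sub_odd hm hn)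
    exact (hasMinIDFWithIndepZeros_of_isClosedWalk hs).swap

theorem stmt17 (m n : ℕ) [NeZero m] [NeZero n] (hm : 2 ≤ m) (hn : 2 ≤ n) :
    ∃ f : ZMod m × ZMod n → ℕ, ItalianDF f ∧ ∑ v, f v = sInf (weights m n) ∧
      ∀ u v : ZMod m × ZMod n, f u = 0 → f v = 0 → ¬ Adj u v :=
  stmt17_general m n
end

section
/- For integers m, n ≥ 3, there exists a minimum-weight Italian dominating function of the directed Cartesian product C_m □ C_n such that no three consecutive vertices in a row or column (i.e., (i,k),(i+1,k),(i+2,k) or (i,k),(i,k+1),(i,k+2)) are all assigned 0. -/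
open Function Finset

theorem sum_comp_update_add {ι α M : Type*} [Fintype ι] [DecidableEq ι] [AddCommMonoid M]
    (φ : α → M) (f : ι → α) (a : ι) (x : α) :
    ∑ v, φ (update f a x v) + φ (f a) = ∑ v, φ (f v) + φ x := by
  simp only [apply_update (fun _ => φ) f a x]
  rw [sum_update_of_mem (mem_univ a), sdiff_singleton_eq_erase,
    ← sum_erase_add _ _ (mem_univ a), add_comm (φ x), add_right_comm]

variable {m n : ℕ} {f : ZMod m × ZMod n → ℕ}

namespace ItalianDF

theorem apply_pred_snd_eq_two (hf : ItalianDF f) {i : ZMod m} {k : ZMod n}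
    (h₀ : f (i - 1, k) = 0) (h : f (i, k) = 0) : f (i, k - 1) = 2 := by
  have := hf.2 (i, k) h
  have := hf.1 (i, k - 1)
  simp only [h₀] at *
  omega

theorem apply_pred_fst_eq_two (hf : ItalianDF f) {i : ZMod m} {k : ZMod n}
    (h₀ : f (i, k - 1) = 0) (h : f (i, k) = 0) : f (i - 1, k) = 2 := by
  have := hf.2 (i, k) h
  have := hf.1 (i - 1, k)
  simp only [h₀] at *
  omega

theorem update_update_one (hf : ItalianDF f) {a b : ZMod m × ZMod n}
    (ha : f a = 2) (hb : f b = 0)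
    (h₁ : f (a.1 + 1, a.2) = 0 → (a.1 + 1, a.2) = b)
    (h₂ : f (a.1, a.2 + 1) = 0 → (a.1, a.2 + 1) = b) :
    ItalianDF (update (update f a 1) b 1) := by
  set g := update (update f a 1) b 1
  have hab : a ≠ b := by rintro rfl; omega
  have hle : ∀ w, w ≠ a → f w ≤ g w := by
    intro w hw
    by_cases hwb : w = b
    · simp [g, hwb, hb]
    · simp [g, hwb, hw]
  refine ⟨fun w => ?_, fun v hv => ?_⟩
  · simp only [g, update_apply]
    split_ifs
    exacts [one_le_two, one_le_two, hf.1 w]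
  have hvb : v ≠ b := by rintro rfl; simp [g] at hv
  have hva : v ≠ a := by rintro rfl; simp [g, hab] at hv
  have hfv : f v = 0 := by simpa [g, hvb, hva] using hv
  have hp : (v.1 - 1, v.2) ≠ a := by rintro rfl; simp [hfv, hvb] at h₁
  have hq : (v.1, v.2 - 1) ≠ a := by rintro rfl; simp [hfv, hvb] at h₂
  calc 2 ≤ f (v.1 - 1, v.2) + f (v.1, v.2 - 1) := hf.2 v hfv
    _ ≤ g (v.1 - 1, v.2) + g (v.1, v.2 - 1) := add_le_add (hle _ hp) (hle _ hq)

end ItalianDF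

variable [NeZero m] [NeZero n]

theorem weights_nonempty : (weights m n).Nonempty :=
  ⟨_, fun _ => 1, ⟨fun _ => one_le_two, fun _ h => absurd h one_ne_zero⟩, rfl⟩

theorem exists_italianDF_weight_eq_sInf_sum_sq_minimal :
    ∃ f : ZMod m × ZMod n → ℕ, ItalianDF f ∧ ∑ v, f v = sInf (weights m n) ∧
      ∀ g : ZMod m × ZMod n → ℕ, ItalianDF g → ∑ v, g v = ∑ v, f v →
        ∑ v, f v ^ 2 ≤ ∑ v, g v ^ 2 := by
  obtain ⟨f₀, hf₀, hw₀⟩ := Nat.sInf_mem (weights_nonempty (m := m) (n := n))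
  obtain ⟨f, ⟨hf, hw⟩, hmin⟩ := (measure fun f : ZMod m × ZMod n → ℕ => ∑ v, f v ^ 2).wf.has_min
    {f | ItalianDF f ∧ ∑ v, f v = sInf (weights m n)} ⟨f₀, hf₀, hw₀⟩
  exact ⟨f, hf, hw, fun g hg hgw => not_lt.1 (hmin g ⟨hg, hgw.trans hw⟩)⟩

theorem ItalianDF.not_update_update_one (hf : ItalianDF f)
    (hmin : ∀ g : ZMod m × ZMod n → ℕ, ItalianDF g → ∑ v, g v = ∑ v, f v →
      ∑ v, f v ^ 2 ≤ ∑ v, g v ^ 2)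
    {a b : ZMod m × ZMod n} (ha : f a = 2) (hb : f b = 0)
    (h₁ : f (a.1 + 1, a.2) = 0 → (a.1 + 1, a.2) = b)
    (h₂ : f (a.1, a.2 + 1) = 0 → (a.1, a.2 + 1) = b) : False := by
  have hab : a ≠ b := by rintro rfl; omega
  have hsum (φ : ℕ → ℕ) :
      ∑ v, φ (update (update f a 1) b 1 v) + φ 0 + φ 2 = ∑ v, φ (f v) + φ 1 + φ 1 := by
    have hb' := sum_comp_update_add φ (update f a 1) b 1
    have ha' := sum_comp_update_add φ f a 1
    rw [update_of_ne hab.symm, hb] at hb'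
    rw [ha] at ha'
    omega
  have hw := hsum id
  have hsq := hsum (· ^ 2)
  simp only [id] at hw hsq
  have := hmin _ (hf.update_update_one ha hb h₁ h₂) (by omega)
  omega

theorem stmt18_general (m n : ℕ) [NeZero m] [NeZero n] :
    ∃ f : ZMod m × ZMod n → ℕ, ItalianDF f ∧ ∑ v, f v = sInf (weights m n) ∧
      (∀ i : ZMod m, ∀ k : ZMod n,
        ¬ (f (i, k) = 0 ∧ f (i + 1, k) = 0 ∧ f (i + 2, k) = 0)) ∧
      (∀ i : ZMod m, ∀ k : ZMod n,
        ¬ (f (i, k) = 0 ∧ f (i, k + 1) = 0 ∧ f (i, k + 2) = 0)) := by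
  obtain ⟨f, hf, hw, hmin⟩ := exists_italianDF_weight_eq_sInf_sum_sq_minimal (m := m) (n := n)
  refine ⟨f, hf, hw, ?_, ?_⟩
  · rintro i k ⟨h₀, h₁, h₂⟩
    have ha := hf.apply_pred_snd_eq_two (by rwa [add_sub_cancel_right]) h₁
    have hc := hf.apply_pred_snd_eq_two (by rwa [show i + 2 - 1 = i + 1 by ring]) h₂
    refine hf.not_update_update_one hmin ha h₁ (fun h => ?_) (fun _ => by simp)
    rw [add_assoc, one_add_one_eq_two, hc] at h
    exact absurd h two_ne_zero
  · rintro i k ⟨h₀, h₁, h₂⟩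
    have ha := hf.apply_pred_fst_eq_two (by rwa [add_sub_cancel_right]) h₁
    have hc := hf.apply_pred_fst_eq_two (by rwa [show k + 2 - 1 = k + 1 by ring]) h₂
    refine hf.not_update_update_one hmin ha h₁ (fun _ => by simp) (fun h => ?_)
    rw [add_assoc, one_add_one_eq_two, hc] at h
    exact absurd h two_ne_zero

theorem stmt18 (m n : ℕ) [NeZero m] [NeZero n] (hm : 3 ≤ m) (hn : 3 ≤ n) :
    ∃ f : ZMod m × ZMod n → ℕ, ItalianDF f ∧ ∑ v, f v = sInf (weights m n) ∧
      (∀ i : ZMod m, ∀ k : ZMod n,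
        ¬ (f (i, k) = 0 ∧ f (i + 1, k) = 0 ∧ f (i + 2, k) = 0)) ∧
      (∀ i : ZMod m, ∀ k : ZMod n,
        ¬ (f (i, k) = 0 ∧ f (i, k + 1) = 0 ∧ f (i, k + 2) = 0)) :=
  stmt18_general m n
end
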